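/- arXiv:2310.20358 — 14 statements merged into one kernel-verified Lean document; each statement's English description precedes it below -/
import Mathlib

section
/- Let n ≥ 1, let c ∈ ℂⁿ, and let g : ℂⁿ → ℂ be a polynomial function such that the function z ↦ g(z + c) − g(z) is constant on ℂⁿ. Then there exist a₁, …, aₙ ∈ ℂ, a constant B ∈ ℂ, and a polynomial function Φ : ℂⁿ → ℂ that is c-periodic, such that g(z) = a₁z₁ + ⋯ + aₙzₙ + Φ(z) + B for all z ∈ ℂⁿ. (This is the structural decomposition, used repeatedly in the proofs of Theorems 1–3, of a polynomial whose difference along c is constant into a linear part, a c-periodic polynomial part Φ as in equation (2.5), and a constant.) -/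
open Complex

/-!
Choose a linear form `ℓ` with `ℓ c = w`, where `w` is the constant difference `g (z + c) - g z`;
such a form exists since `c = 0` forces `w = 0`. Then `g - ℓ` is a `c`-periodic polynomial.
-/

theorem exists_sum_mul_eq_of_eq_zero_imp {K ι : Type*} [Field K] [Fintype ι] [DecidableEq ι]
    (c : ι → K) (w : K) (h : c = 0 → w = 0) : ∃ a : ι → K, ∑ j, a j * c j = w := by
  by_cases hc : c = 0
  · exact ⟨0, by simp [h hc]⟩
  · obtain ⟨j, hj⟩ : ∃ j, c j ≠ 0 := Function.ne_iff.mp hc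
    exact ⟨Pi.single j (w / c j), by simp [Pi.single_apply, hj]⟩

theorem periodic_sub_sum_mul {R ι : Type*} [CommRing R] [Fintype ι] (g : (ι → R) → R)
    (a c : ι → R) (hg : ∀ z, g (z + c) - g z = ∑ j, a j * c j) :
    Function.Periodic (fun z => g z - ∑ j, a j * z j) c := fun z => by
  simp only [Pi.add_apply, mul_add, Finset.sum_add_distrib]
  linear_combination hg z

theorem stmt_0_general (n : ℕ) (c : Fin n → ℂ) (g : (Fin n → ℂ) → ℂ)
    (hg : ∃ p : MvPolynomial (Fin n) ℂ, ∀ z, g z = MvPolynomial.eval z p)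
    (hconst : ∃ w : ℂ, ∀ z, g (z + c) - g z = w) :
    ∃ (a : Fin n → ℂ) (B : ℂ) (Φ : (Fin n → ℂ) → ℂ),
      (∃ q : MvPolynomial (Fin n) ℂ, ∀ z, Φ z = MvPolynomial.eval z q) ∧
      (∀ z, Φ (z + c) = Φ z) ∧
      (∀ z, g z = (∑ j, a j * z j) + Φ z + B) := by
  obtain ⟨p, hp⟩ := hg
  obtain ⟨w, hw⟩ := hconst
  have hw_zero : c = 0 → w = 0 := fun hc => by simpa [hc] using (hw 0).symm
  obtain ⟨a, ha⟩ := exists_sum_mul_eq_of_eq_zero_imp c w hw_zero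
  refine ⟨a, 0, fun z => g z - ∑ j, a j * z j,
    ⟨p - ∑ j, MvPolynomial.C (a j) * MvPolynomial.X j, fun z => by simp [hp]⟩,
    periodic_sub_sum_mul g a c (fun z => (hw z).trans ha.symm), fun z => by ring⟩

/-- Structural decomposition: a polynomial function on ℂⁿ whose difference along `c`
is constant splits into a linear part, a `c`-periodic polynomial part, and a constant. -/
theorem stmt_0 (n : ℕ) (hn : 1 ≤ n) (c : Fin n → ℂ) (g : (Fin n → ℂ) → ℂ)
    (hg : ∃ p : MvPolynomial (Fin n) ℂ, ∀ z, g z = MvPolynomial.eval z p)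
    (hconst : ∃ w : ℂ, ∀ z, g (z + c) - g z = w) :
    ∃ (a : Fin n → ℂ) (B : ℂ) (Φ : (Fin n → ℂ) → ℂ),
      (∃ q : MvPolynomial (Fin n) ℂ, ∀ z, Φ z = MvPolynomial.eval z q) ∧
      (∀ z, Φ (z + c) = Φ z) ∧
      (∀ z, g z = (∑ j, a j * z j) + Φ z + B) :=
  stmt_0_general n c g hg hconst
end

section
/- Let n ≥ 1, let A, B : ℂⁿ → ℂ be polynomial functions, and let w ∈ ℂ with w ≠ 0. If exp(A(z)) + exp(B(z)) = w for all z ∈ ℂⁿ, then both A and B are constant. (This is the claim established via the second fundamental theorem in Case 3 of the proof of Theorem 2 and in equation (2.37) of the proof of Theorem 3, specialized to polynomial exponents.) -/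
/-!
`exp A` omits the value `w` (otherwise `exp B = 0`), so the polynomial `A` omits `log w`, and
likewise for `B`. A polynomial function on `Kⁿ`, `K` algebraically closed, that omits a value is
constant: its restriction to each line `t ↦ t • z` is a one-variable polynomial omitting that
value, hence constant, so `A (1 • z) = A (0 • z)`.
-/

open Complex

lemma Polynomial.eval_eq_eval_zero_of_forall_ne {K : Type*} [Field K] [IsAlgClosed K]
    {p : Polynomial K} {c : K} (h : ∀ t, p.eval t ≠ c) (t : K) : p.eval t = p.eval 0 := by
  have hdeg : p.natDegree = 0 := by
    by_contra hp
    obtain ⟨s, hs⟩ := IsAlgClosed.eval_surjective hp c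
    exact h s hs
  rw [Polynomial.eq_C_of_natDegree_eq_zero hdeg]
  simp

lemma MvPolynomial.eval_aeval_smul_line {σ R : Type*} [CommSemiring R] (p : MvPolynomial σ R)
    (z : σ → R) (t : R) :
    ((aeval fun i => Polynomial.C (z i) * Polynomial.X) p).eval t = eval (t • z) p := by
  induction p using MvPolynomial.induction_on with
  | C a => simp
  | add p q hp hq => simp [hp, hq]
  | mul_X p i hp => simp [hp, mul_comm t]

lemma MvPolynomial.eval_eq_eval_zero_of_forall_ne {σ K : Type*} [Field K] [IsAlgClosed K]
    {p : MvPolynomial σ K} {c : K} (h : ∀ z, eval z p ≠ c) (z : σ → K) :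
    eval z p = eval 0 p := by
  have hline := Polynomial.eval_eq_eval_zero_of_forall_ne
    (p := aeval (fun i => Polynomial.C (z i) * Polynomial.X) p) (c := c)
    (fun t => by rw [eval_aeval_smul_line]; exact h _) 1
  simpa only [eval_aeval_smul_line, one_smul, zero_smul] using hline

lemma Complex.ne_log_of_exp_add_exp_eq {a b w : ℂ} (hw : w ≠ 0) (h : exp a + exp b = w) :
    a ≠ log w := by
  rintro rfl
  rw [exp_log hw, add_eq_left] at h
  exact exp_ne_zero b h

theorem stmt_2_general (n : ℕ) (A B : (Fin n → ℂ) → ℂ)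
    (hA : ∃ p : MvPolynomial (Fin n) ℂ, ∀ z, A z = MvPolynomial.eval z p)
    (hB : ∃ q : MvPolynomial (Fin n) ℂ, ∀ z, B z = MvPolynomial.eval z q)
    (w : ℂ) (hw : w ≠ 0)
    (heq : ∀ z, Complex.exp (A z) + Complex.exp (B z) = w) :
    (∃ u : ℂ, ∀ z, A z = u) ∧ (∃ v : ℂ, ∀ z, B z = v) := by
  obtain ⟨p, hp⟩ := hA
  obtain ⟨q, hq⟩ := hB
  have hp_ne : ∀ z, MvPolynomial.eval z p ≠ log w := fun z =>
    hp z ▸ ne_log_of_exp_add_exp_eq hw (heq z)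
  have hq_ne : ∀ z, MvPolynomial.eval z q ≠ log w := fun z =>
    hq z ▸ ne_log_of_exp_add_exp_eq hw ((add_comm _ _).trans (heq z))
  exact ⟨⟨_, fun z => (hp z).trans (MvPolynomial.eval_eq_eval_zero_of_forall_ne hp_ne z)⟩,
    ⟨_, fun z => (hq z).trans (MvPolynomial.eval_eq_eval_zero_of_forall_ne hq_ne z)⟩⟩

/-- If the sum of the exponentials of two polynomial functions on ℂⁿ is identically a
nonzero constant, then both polynomial functions are constant. -/
theorem stmt_2 (n : ℕ) (hn : 1 ≤ n) (A B : (Fin n → ℂ) → ℂ)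
    (hA : ∃ p : MvPolynomial (Fin n) ℂ, ∀ z, A z = MvPolynomial.eval z p)
    (hB : ∃ q : MvPolynomial (Fin n) ℂ, ∀ z, B z = MvPolynomial.eval z q)
    (w : ℂ) (hw : w ≠ 0)
    (heq : ∀ z, Complex.exp (A z) + Complex.exp (B z) = w) :
    (∃ u : ℂ, ∀ z, A z = u) ∧ (∃ v : ℂ, ∀ z, B z = v) :=
  stmt_2_general n A B hA hB w hw heq
end

section
/- (Borel-type lemma; polynomial-data case of Lemma 3.7.) Let m ≥ 1, let g₀, g₁, …, g_N : ℂᵐ → ℂ be polynomial functions such that gⱼ − gₖ is non-constant for all 0 ≤ j < k ≤ N, and let a₀, a₁, …, a_N : ℂᵐ → ℂ be polynomial functions. If a₀(z)·exp(g₀(z)) + a₁(z)·exp(g₁(z)) + ⋯ + a_N(z)·exp(g_N(z)) = 0 for all z ∈ ℂᵐ, then aⱼ ≡ 0 for every j = 0, 1, …, N. -/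
open Complex Polynomial

/-!
Restricting to a complex line `t ↦ z₀ + t • v` reduces the theorem to one variable, provided
the direction `v` keeps every difference `gⱼ - gₖ` non-constant; such a `v` exists because a
product of finitely many nonzero polynomials in `(t, v)` is nonzero. In one variable, divide by
`exp G_N` and differentiate `deg A_N + 1` times: the last term disappears, while each other term
`A_j exp (G_j - G_N)` becomes `B_j exp (G_j - G_N)` with `B_j ≠ 0` whenever `A_j ≠ 0`, since
`A ↦ A' + A Q'` has no nonzero kernel when `Q' ≠ 0`. Induction on the number of terms finishes.
-/

section ExpDeriv

variable {R : Type*} [Semiring R]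

noncomputable def expDeriv (Q A : R[X]) : R[X] := derivative A + A * derivative Q

theorem expDeriv_zero_left : expDeriv (0 : R[X]) = ⇑derivative := by
  funext A
  rw [expDeriv]
  simp

variable [NoZeroDivisors R]

theorem expDeriv_ne_zero {Q A : R[X]} (hQ : derivative Q ≠ 0) (hA : A ≠ 0) :
    expDeriv Q A ≠ 0 := by
  have hAQ : A * derivative Q ≠ 0 := mul_ne_zero hA hQ
  by_cases hA' : derivative A = 0
  · simpa [expDeriv, hA'] using hAQ
  have hlt : (derivative A).natDegree < (A * derivative Q).natDegree := by
    rw [natDegree_mul hA hQ]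
    exact (natDegree_derivative_lt fun h => hA' (derivative_of_natDegree_zero h)).trans_le
      (Nat.le_add_right _ _)
  intro h
  have hdeg := natDegree_add_eq_right_of_natDegree_lt hlt
  rw [← expDeriv, h, natDegree_zero] at hdeg
  omega

theorem iterate_expDeriv_ne_zero {Q A : R[X]} (hQ : derivative Q ≠ 0) (hA : A ≠ 0) (n : ℕ) :
    (expDeriv Q)^[n] A ≠ 0 := by
  induction n with
  | zero => exact hA
  | succ n ih => rw [Function.iterate_succ_apply']; exact expDeriv_ne_zero hQ ih

end ExpDeriv

theorem hasDerivAt_eval_mul_exp_eval (Q A : ℂ[X]) (t : ℂ) :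
    HasDerivAt (fun s => A.eval s * exp (Q.eval s)) ((expDeriv Q A).eval t * exp (Q.eval t)) t := by
  refine ((A.hasDerivAt t).fun_mul (Q.hasDerivAt t).cexp).congr_deriv ?_
  simp only [expDeriv, eval_add, eval_mul]
  ring

section ExpPolySum

variable {ι : Type*}

noncomputable def expPolySum (s : Finset ι) (A G : ι → ℂ[X]) (t : ℂ) : ℂ :=
  ∑ j ∈ s, (A j).eval t * exp ((G j).eval t)

theorem hasDerivAt_expPolySum (s : Finset ι) (A G : ι → ℂ[X]) (t : ℂ) :
    HasDerivAt (expPolySum s A G) (expPolySum s (fun j => expDeriv (G j) (A j)) G t) t := by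
  unfold expPolySum
  exact HasDerivAt.fun_sum fun j _ => hasDerivAt_eval_mul_exp_eval (G j) (A j) t

theorem expPolySum_expDeriv_eq_zero {s : Finset ι} {A G : ι → ℂ[X]}
    (h : expPolySum s A G = 0) :
    expPolySum s (fun j => expDeriv (G j) (A j)) G = 0 := by
  funext t
  have hd := hasDerivAt_expPolySum s A G t
  rw [h] at hd
  exact hd.unique (hasDerivAt_const t 0)

theorem expPolySum_iterate_expDeriv_eq_zero {s : Finset ι} {A G : ι → ℂ[X]}
    (h : expPolySum s A G = 0) (n : ℕ) :
    expPolySum s (fun j => (expDeriv (G j))^[n] (A j)) G = 0 := by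
  induction n with
  | zero => exact h
  | succ n ih =>
    simpa only [Function.iterate_succ_apply'] using expPolySum_expDeriv_eq_zero ih

theorem expPolySum_sub_eq_zero {s : Finset ι} {A G : ι → ℂ[X]} (h : expPolySum s A G = 0)
    (Q : ℂ[X]) : expPolySum s A (fun j => G j - Q) = 0 := by
  funext t
  have ht : expPolySum s A (fun j => G j - Q) t = expPolySum s A G t * exp (-Q.eval t) := by
    simp only [expPolySum, Finset.sum_mul, eval_sub, exp_sub, exp_neg, div_eq_mul_inv, mul_assoc]
  rw [ht, h, Pi.zero_apply, zero_mul]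

theorem expPolySum_eliminate_of_insert [DecidableEq ι] {i : ι} {s : Finset ι} (hi : i ∉ s)
    {A G : ι → ℂ[X]}
    (h : expPolySum (insert i s) A G = 0) :
    expPolySum s (fun j => (expDeriv (G j - G i))^[(A i).natDegree + 1] (A j))
      (fun j => G j - G i) = 0 := by
  set B := fun j => (expDeriv (G j - G i))^[(A i).natDegree + 1] (A j)
  have hB : expPolySum (insert i s) B (fun j => G j - G i) = 0 :=
    expPolySum_iterate_expDeriv_eq_zero (expPolySum_sub_eq_zero h (G i)) _
  have hBi : B i = 0 := by
    simp only [B, sub_self, expDeriv_zero_left]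
    exact iterate_derivative_eq_zero (Nat.lt_succ_self _)
  funext t
  have ht := congrFun hB t
  rwa [expPolySum, Finset.sum_insert hi, hBi, eval_zero, zero_mul, zero_add] at ht

theorem eq_zero_of_expPolySum_eq_zero {s : Finset ι} {A G : ι → ℂ[X]}
    (hG : (s : Set ι).Pairwise fun j k => derivative (G j - G k) ≠ 0)
    (h : expPolySum s A G = 0) : ∀ j ∈ s, A j = 0 := by
  classical
  induction s using Finset.induction_on generalizing A G with
  | empty => simp
  | insert i s hi ih =>
    have hG' : (s : Set ι).Pairwise fun j k => derivative ((G j - G i) - (G k - G i)) ≠ 0 :=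
      fun j hj k hk hjk => by
        simpa only [sub_sub_sub_cancel_right] using
          hG (Finset.mem_insert_of_mem hj) (Finset.mem_insert_of_mem hk) hjk
    have hAs : ∀ j ∈ s, A j = 0 := by
      intro j hj
      by_contra hAj
      refine iterate_expDeriv_ne_zero ?_ hAj _ (ih hG' (expPolySum_eliminate_of_insert hi h) j hj)
      exact hG (Finset.mem_insert_of_mem hj) (Finset.mem_insert_self i s)
        (ne_of_mem_of_not_mem hj hi)
    have hAi : A i = 0 := by
      refine funext fun t => ?_
      have ht := congrFun h t
      rw [expPolySum, Finset.sum_insert hi,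
        Finset.sum_eq_zero fun j hj => by rw [hAs j hj, eval_zero, zero_mul], add_zero] at ht
      simpa [exp_ne_zero] using ht
    intro j hj
    rcases Finset.mem_insert.mp hj with rfl | hj
    · exact hAi
    · exact hAs j hj

end ExpPolySum

section LineRestriction

variable {σ R : Type*} [CommRing R]

noncomputable def lineRestrict (z₀ v : σ → R) : MvPolynomial σ R →ₐ[R] R[X] :=
  MvPolynomial.aeval fun i => C (z₀ i) + C (v i) * X

theorem eval_lineRestrict (z₀ v : σ → R) (p : MvPolynomial σ R) (t : R) :
    (lineRestrict z₀ v p).eval t = MvPolynomial.eval (z₀ + t • v) p := by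
  induction p using MvPolynomial.induction_on with
  | C c => simp [lineRestrict]
  | add p q hp hq => simp only [map_add, eval_add, hp, hq]
  | mul_X p i hp =>
    rw [map_mul, eval_mul, hp]
    simp only [lineRestrict, MvPolynomial.aeval_X, eval_add, eval_mul, eval_C, eval_X,
      MvPolynomial.eval_mul, MvPolynomial.eval_X, Pi.add_apply, Pi.smul_apply, smul_eq_mul,
      mul_comm t]

noncomputable def universalLine (z₀ : σ → R) :
    MvPolynomial σ R →ₐ[R] MvPolynomial (Option σ) R :=
  MvPolynomial.aeval fun i =>
    MvPolynomial.C (z₀ i) + MvPolynomial.X none * MvPolynomial.X (some i)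

theorem eval_universalLine (z₀ : σ → R) (p : MvPolynomial σ R) (u : Option σ → R) :
    MvPolynomial.eval u (universalLine z₀ p) =
      MvPolynomial.eval (z₀ + u none • (u ∘ some)) p := by
  induction p using MvPolynomial.induction_on with
  | C c => simp [universalLine]
  | add p q hp hq => simp only [map_add, hp, hq]
  | mul_X p i hp => simp [universalLine, ← hp]

theorem exists_forall_exists_eval_add_smul_ne [IsDomain R] [Infinite R] {ι : Type*} [Fintype ι]
    (z₀ : σ → R) (q : ι → MvPolynomial σ R)
    (hq : ∀ s, ∃ w, MvPolynomial.eval w (q s) ≠ MvPolynomial.eval z₀ (q s)) :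
    ∃ v : σ → R, ∀ s, ∃ t : R,
      MvPolynomial.eval (z₀ + t • v) (q s) ≠ MvPolynomial.eval z₀ (q s) := by
  -- If every direction `v` were bad for some `s`, the nonzero polynomial `∏ s, Q s` in the
  -- variables `(t, v)` would vanish everywhere.
  set Q := fun s => universalLine z₀ (q s) - MvPolynomial.C (MvPolynomial.eval z₀ (q s))
  have hQ : ∀ u s, MvPolynomial.eval u (Q s) =
      MvPolynomial.eval (z₀ + u none • (u ∘ some)) (q s) - MvPolynomial.eval z₀ (q s) := by
    intro u s
    simp only [Q, map_sub, MvPolynomial.eval_C, eval_universalLine]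
  have hQ_ne : ∀ s, Q s ≠ 0 := by
    intro s hs
    obtain ⟨w, hw⟩ := hq s
    have h := hQ (Option.elim · 1 (w - z₀)) s
    change _ = MvPolynomial.eval (z₀ + (1 : R) • (w - z₀)) _ - _ at h
    rw [hs, map_zero, one_smul, add_sub_cancel] at h
    exact hw (sub_eq_zero.mp h.symm)
  by_contra! hbad
  refine Finset.prod_ne_zero_iff.mpr (fun s (_ : s ∈ Finset.univ) => hQ_ne s)
    (MvPolynomial.funext fun u => ?_)
  obtain ⟨s, hs⟩ := hbad (u ∘ some)
  rw [map_prod, map_zero]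
  exact Finset.prod_eq_zero (Finset.mem_univ s) (by rw [hQ, hs, sub_self])

theorem derivative_lineRestrict_ne_zero [IsAddTorsionFree R] {z₀ v : σ → R}
    {p : MvPolynomial σ R} {t : R}
    (h : MvPolynomial.eval (z₀ + t • v) p ≠ MvPolynomial.eval z₀ p) :
    derivative (lineRestrict z₀ v p) ≠ 0 := by
  intro h0
  have hconst : (lineRestrict z₀ v p).eval t = (lineRestrict z₀ v p).eval 0 := by
    rw [eq_C_of_derivative_eq_zero h0, eval_C, eval_C]
  rw [eval_lineRestrict, eval_lineRestrict, zero_smul, add_zero] at hconst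
  exact h hconst

end LineRestriction

theorem stmt_3_general (m : ℕ) (N : ℕ)
    (g a : Fin (N + 1) → ((Fin m → ℂ) → ℂ))
    (hg : ∀ j, ∃ p : MvPolynomial (Fin m) ℂ, ∀ z, g j z = MvPolynomial.eval z p)
    (ha : ∀ j, ∃ p : MvPolynomial (Fin m) ℂ, ∀ z, a j z = MvPolynomial.eval z p)
    (hdiff : ∀ j k : Fin (N + 1), j < k → ¬ ∃ w : ℂ, ∀ z, g j z - g k z = w)
    (heq : ∀ z, ∑ j, a j z * Complex.exp (g j z) = 0) :
    ∀ j, ∀ z, a j z = 0 := by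
  choose pg hpg using hg
  choose pa hpa using ha
  intro j z₀
  obtain ⟨v, hv⟩ := exists_forall_exists_eval_add_smul_ne z₀
    (fun s : {jk : Fin (N + 1) × Fin (N + 1) // jk.1 < jk.2} => pg s.1.1 - pg s.1.2)
    (fun ⟨(j, k), hjk⟩ => by
      by_contra! hconst
      exact hdiff j k hjk ⟨_, fun z => by simpa [hpg] using hconst z⟩)
  set L := lineRestrict z₀ v
  have hlt : ∀ j k, j < k → derivative (L (pg j) - L (pg k)) ≠ 0 := by
    intro j k hjk
    obtain ⟨t, ht⟩ := hv ⟨(j, k), hjk⟩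
    rw [← map_sub]
    exact derivative_lineRestrict_ne_zero ht
  have hG : ((Finset.univ : Finset (Fin (N + 1))) : Set (Fin (N + 1))).Pairwise
      fun j k => derivative (L (pg j) - L (pg k)) ≠ 0 := by
    intro j _ k _ hjk
    rcases hjk.lt_or_gt with hjk | hkj
    · exact hlt j k hjk
    · rw [← neg_sub, derivative_neg, neg_ne_zero]
      exact hlt k j hkj
  have hsum : expPolySum Finset.univ (fun i => L (pa i)) (fun i => L (pg i)) = 0 := by
    funext t
    simpa [expPolySum, L, eval_lineRestrict, ← hpa, ← hpg] using heq (z₀ + t • v)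
  have hLj := congrArg (eval 0) (eq_zero_of_expPolySum_eq_zero hG hsum j (Finset.mem_univ j))
  simpa [L, eval_lineRestrict, hpa] using hLj

/-- Borel-type lemma (polynomial-data case): if the polynomial exponents have pairwise
non-constant differences and ∑ aⱼ e^{gⱼ} ≡ 0 with polynomial coefficients aⱼ, then every
aⱼ vanishes identically. -/
theorem stmt_3 (m : ℕ) (hm : 1 ≤ m) (N : ℕ)
    (g a : Fin (N + 1) → ((Fin m → ℂ) → ℂ))
    (hg : ∀ j, ∃ p : MvPolynomial (Fin m) ℂ, ∀ z, g j z = MvPolynomial.eval z p)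
    (ha : ∀ j, ∃ p : MvPolynomial (Fin m) ℂ, ∀ z, a j z = MvPolynomial.eval z p)
    (hdiff : ∀ j k : Fin (N + 1), j < k → ¬ ∃ w : ℂ, ∀ z, g j z - g k z = w)
    (heq : ∀ z, ∑ j, a j z * Complex.exp (g j z) = 0) :
    ∀ j, ∀ z, a j z = 0 :=
  stmt_3_general m N g a hg ha hdiff heq
end

section
/- Let c = (c₁, c₂) ∈ ℂ² and let p : ℂ² → ℂ be a polynomial function such that z ↦ p(z + c) − p(z) is constant on ℂ² and such that ∂p/∂z₁ is constant on ℂ². Then there exist a₁, a₂, β ∈ ℂ and a one-variable polynomial function H : ℂ → ℂ satisfying H(z₂ + c₂) = H(z₂) for all z₂ ∈ ℂ, such that p(z₁, z₂) = a₁z₁ + a₂z₂ + H(z₂) + β for all (z₁, z₂) ∈ ℂ². (This is the structural claim, used in Cases 1 and 2 of the proof of Theorem 2 and in the proof of Theorem 3, giving the shape L(z) + H(s) + β of the polynomial exponents.) -/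
/-!
Since `∂p/∂z₁ ≡ d`, every horizontal slice of `p` is affine with slope `d`, so
`p(z₁, z₂) = d z₁ + G(z₂)` with `G = p(0, ·)` a polynomial. The constant difference of `p`
along `c` says `G(s + c₂) - G(s) = k` is constant, hence `G(s) - (k / c₂) s` is
`c₂`-periodic; this is `H`.
-/

theorem MvPolynomial.exists_polynomial_eval_eq {R σ : Type*} [CommSemiring R]
    (q : MvPolynomial σ R) (f : σ → Polynomial R) :
    ∃ P : Polynomial R, ∀ t, eval (fun i => (f i).eval t) q = P.eval t := by
  refine ⟨aeval f q, fun t => ?_⟩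
  rw [aeval_def, polynomial_eval_eval₂, MvPolynomial.eval, coe_eval₂Hom]
  congr 1
  exact RingHom.ext fun r => by simp

theorem MvPolynomial.exists_polynomial_eval_vecCons_eq {R : Type*} [CommSemiring R]
    (q : MvPolynomial (Fin 2) R) (f g : Polynomial R) :
    ∃ P : Polynomial R, ∀ t, eval ![f.eval t, g.eval t] q = P.eval t := by
  obtain ⟨P, hP⟩ := q.exists_polynomial_eval_eq ![f, g]
  refine ⟨P, fun t => ?_⟩
  rw [← hP]
  congr
  funext i
  fin_cases i <;> rfl

theorem eq_add_smul_of_deriv_eq_const {𝕜 G : Type*} [RCLike 𝕜] [NormedAddCommGroup G]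
    [NormedSpace 𝕜 G] {f : 𝕜 → G} (hf : Differentiable 𝕜 f) {d : G} (hd : ∀ x, deriv f x = d)
    (x : 𝕜) : f x = f 0 + x • d := by
  have hg : Differentiable 𝕜 fun x => f x - x • d := hf.sub (differentiable_id.smul_const d)
  have hg' (y : 𝕜) : deriv (fun x => f x - x • d) y = 0 := by
    rw [((hf y).hasDerivAt.fun_sub ((hasDerivAt_id' y).smul_const d)).deriv, hd, one_smul,
      sub_self]
  simpa [sub_eq_iff_eq_add] using is_const_of_deriv_eq_zero hg hg' x 0

/-- For `c = 0` the slope `k / c` is the junk value `0`. -/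
theorem Function.Periodic.sub_div_mul {K : Type*} [Field K] {G : K → K} {c k : K}
    (hG : ∀ s, G (s + c) - G s = k) : Function.Periodic (fun s => G s - k / c * s) c := by
  intro s
  rcases eq_or_ne c 0 with rfl | hc
  · simp
  · show G (s + c) - k / c * (s + c) = G s - k / c * s
    rw [mul_add, div_mul_cancel₀ k hc]
    linear_combination hG s

/-- Structural shape of a polynomial p on ℂ² whose difference along c is constant and
whose ∂p/∂z₁ is constant: p(z₁, z₂) = a₁z₁ + a₂z₂ + H(z₂) + β with H a c₂-periodic
one-variable polynomial function. -/
theorem stmt_6 (c : ℂ × ℂ) (p : ℂ × ℂ → ℂ)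
    (hp : ∃ q : MvPolynomial (Fin 2) ℂ, ∀ z : ℂ × ℂ, p z = MvPolynomial.eval ![z.1, z.2] q)
    (hdiff : ∃ w : ℂ, ∀ z : ℂ × ℂ, p (z + c) - p z = w)
    (hderiv : ∃ d : ℂ, ∀ z : ℂ × ℂ, deriv (fun t => p (t, z.2)) z.1 = d) :
    ∃ (a₁ a₂ β : ℂ) (H : ℂ → ℂ),
      (∃ h : Polynomial ℂ, ∀ t, H t = Polynomial.eval t h) ∧
      (∀ t : ℂ, H (t + c.2) = H t) ∧
      (∀ z : ℂ × ℂ, p z = a₁ * z.1 + a₂ * z.2 + H z.2 + β) := by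
  obtain ⟨q, hq⟩ := hp
  obtain ⟨w, hw⟩ := hdiff
  obtain ⟨d, hd⟩ := hderiv
  have h_affine (z : ℂ × ℂ) : p z = d * z.1 + p (0, z.2) := by
    obtain ⟨P, hP⟩ := q.exists_polynomial_eval_vecCons_eq Polynomial.X (Polynomial.C z.2)
    have h_slice : (fun t => p (t, z.2)) = fun t => P.eval t := by
      funext t
      simpa [hq] using hP t
    have := eq_add_smul_of_deriv_eq_const (h_slice ▸ P.differentiable) (fun t => hd (t, z.2)) z.1
    rw [this, smul_eq_mul]
    ring
  have h_step (s : ℂ) : p (0, s + c.2) - p (0, s) = w - d * c.1 := by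
    have := hw (0, s)
    rw [h_affine (_ + c), h_affine (0, s)] at this
    simp only [Prod.fst_add, Prod.snd_add, zero_add, mul_zero] at this
    linear_combination this
  obtain ⟨G, hG⟩ := q.exists_polynomial_eval_vecCons_eq (Polynomial.C 0) Polynomial.X
  set a₂ := (w - d * c.1) / c.2
  refine ⟨d, a₂, 0, fun s => p (0, s) - a₂ * s, ⟨G - Polynomial.C a₂ * Polynomial.X, fun t => ?_⟩,
    Function.Periodic.sub_div_mul (G := fun s => p (0, s)) h_step, fun z => ?_⟩
  · simpa [hq] using hG t
  · rw [h_affine z]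
    ring
end

section
/- (Verification direction of Theorem 1, conclusion (i).) Let n ≥ 1, c ∈ ℂⁿ, let ξ₁, ξ₂ ∈ ℂ with ξⱼ ≠ 0 and ξⱼ⁴ ≠ 1 for j = 1, 2, let a₁, …, aₙ ∈ ℂ and set L(z) = a₁z₁ + ⋯ + aₙzₙ, let Φ : ℂⁿ → ℂ be a c-periodic polynomial function, and let B₁, B₂ ∈ ℂ satisfy exp(L(c)) = −(ξ₁² − 1)(ξ₂² − 1)/((ξ₁² + 1)(ξ₂² + 1)) and exp(B₁ − B₂) = ξ₁²(ξ₂⁴ − 1)/(ξ₂²(ξ₁⁴ − 1)). Define f₁(z) = ((ξ₁² + 1)/(2ξ₁))·exp((L(z) + Φ(z) + B₁)/2) and f₂(z) = ((ξ₂² + 1)/(2ξ₂))·exp((L(z) + Φ(z) + B₂)/2). Then for all z ∈ ℂⁿ: f₁(z)² + f₂(z + c)² = exp(L(z) + Φ(z) + B₁) and f₂(z)² + f₁(z + c)² = exp(L(z) + Φ(z) + B₂). -/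
/-!
Put `A = (ξ² + 1)/(2ξ)` and `s = (ξ² - 1)/(2ξ)`, so that `A = cosh t`, `s = sinh t` for `ξ = eᵗ`
and `A² - s² = 1`. The hypotheses say `λ := e^{L(c)} = -s₁s₂/(A₁A₂)` and
`β := e^{B₁-B₂} = s₂A₂/(s₁A₁)`. Since `L + Φ` shifts by the constant `L(c)` under `z ↦ z + c`,
both equations of the system reduce, after dividing by `e^{L(z)+Φ(z)+B₂}`, to the scalar
identities `A₁²β + A₂²λ = β` and `A₂² + A₁²βλ = 1`, which follow from `A_j² - s_j² = 1`.
-/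

open Complex

lemma exp_div_two_sq (w : ℂ) : exp (w / 2) ^ 2 = exp w := by
  rw [sq, ← exp_add, add_halves]

theorem fermat_system_of_map_add_eq_add_const {X : Type*} [Add X] (c : X) (ψ : X → ℂ) (ℓ : ℂ)
    (hψ : ∀ z, ψ (z + c) = ψ z + ℓ) (A₁ A₂ B₁ B₂ : ℂ)
    (h₁ : A₁ ^ 2 * exp (B₁ - B₂) + A₂ ^ 2 * exp ℓ = exp (B₁ - B₂))
    (h₂ : A₂ ^ 2 + A₁ ^ 2 * exp (B₁ - B₂) * exp ℓ = 1) (z : X) :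
    (A₁ * exp ((ψ z + B₁) / 2)) ^ 2 + (A₂ * exp ((ψ (z + c) + B₂) / 2)) ^ 2
        = exp (ψ z + B₁) ∧
      (A₂ * exp ((ψ z + B₂) / 2)) ^ 2 + (A₁ * exp ((ψ (z + c) + B₁) / 2)) ^ 2
        = exp (ψ z + B₂) := by
  have hB₁ : exp (ψ z + B₁) = exp (ψ z + B₂) * exp (B₁ - B₂) := by
    rw [← exp_add]; ring_nf
  have hshift : ∀ B, exp (ψ (z + c) + B) = exp (ψ z + B) * exp ℓ := fun B => by
    rw [hψ, ← exp_add]; ring_nf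
  simp only [mul_pow, exp_div_two_sq, hshift, hB₁]
  constructor
  · linear_combination exp (ψ z + B₂) * h₁
  · linear_combination exp (ψ z + B₂) * h₂

lemma coeff_identities_of_sq_sub_sq_eq_one {A₁ A₂ s₁ s₂ : ℂ}
    (h₁ : A₁ ^ 2 - s₁ ^ 2 = 1) (h₂ : A₂ ^ 2 - s₂ ^ 2 = 1)
    (hs₁ : s₁ ≠ 0) (hA₁ : A₁ ≠ 0) (hA₂ : A₂ ≠ 0) :
    A₁ ^ 2 * (s₂ * A₂ / (s₁ * A₁)) + A₂ ^ 2 * (-(s₁ * s₂) / (A₁ * A₂)) = s₂ * A₂ / (s₁ * A₁) ∧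
      A₂ ^ 2 + A₁ ^ 2 * (s₂ * A₂ / (s₁ * A₁)) * (-(s₁ * s₂) / (A₁ * A₂)) = 1 := by
  constructor
  · field_simp
    linear_combination s₂ * h₁
  · field_simp
    linear_combination h₂

lemma sq_add_one_div_sq_sub_sq_sub_one_div_sq {ξ : ℂ} (hξ : ξ ≠ 0) :
    ((ξ ^ 2 + 1) / (2 * ξ)) ^ 2 - ((ξ ^ 2 - 1) / (2 * ξ)) ^ 2 = 1 := by
  field_simp
  ring

lemma sq_sub_one_ne_zero_and_sq_add_one_ne_zero {ξ : ℂ} (h : ξ ^ 4 ≠ 1) :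
    ξ ^ 2 - 1 ≠ 0 ∧ ξ ^ 2 + 1 ≠ 0 := by
  rw [← mul_ne_zero_iff, show (ξ ^ 2 - 1) * (ξ ^ 2 + 1) = ξ ^ 4 - 1 by ring, sub_ne_zero]
  exact h

lemma fermat_coeff_identities {ξ₁ ξ₂ : ℂ} (hξ₁0 : ξ₁ ≠ 0) (hξ₂0 : ξ₂ ≠ 0)
    (hξ₁4 : ξ₁ ^ 4 ≠ 1) (hξ₂4 : ξ₂ ^ 4 ≠ 1) :
    ((ξ₁ ^ 2 + 1) / (2 * ξ₁)) ^ 2 * (ξ₁ ^ 2 * (ξ₂ ^ 4 - 1) / (ξ₂ ^ 2 * (ξ₁ ^ 4 - 1)))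
        + ((ξ₂ ^ 2 + 1) / (2 * ξ₂)) ^ 2 *
          (-((ξ₁ ^ 2 - 1) * (ξ₂ ^ 2 - 1)) / ((ξ₁ ^ 2 + 1) * (ξ₂ ^ 2 + 1)))
        = ξ₁ ^ 2 * (ξ₂ ^ 4 - 1) / (ξ₂ ^ 2 * (ξ₁ ^ 4 - 1)) ∧
    ((ξ₂ ^ 2 + 1) / (2 * ξ₂)) ^ 2
        + ((ξ₁ ^ 2 + 1) / (2 * ξ₁)) ^ 2 * (ξ₁ ^ 2 * (ξ₂ ^ 4 - 1) / (ξ₂ ^ 2 * (ξ₁ ^ 4 - 1))) *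
          (-((ξ₁ ^ 2 - 1) * (ξ₂ ^ 2 - 1)) / ((ξ₁ ^ 2 + 1) * (ξ₂ ^ 2 + 1)))
        = 1 := by
  obtain ⟨hm₁, hp₁⟩ := sq_sub_one_ne_zero_and_sq_add_one_ne_zero hξ₁4
  have hp₂ := (sq_sub_one_ne_zero_and_sq_add_one_ne_zero hξ₂4).2
  have h2ξ₁ : 2 * ξ₁ ≠ 0 := mul_ne_zero two_ne_zero hξ₁0
  have h2ξ₂ : 2 * ξ₂ ≠ 0 := mul_ne_zero two_ne_zero hξ₂0
  have hβ : ξ₁ ^ 2 * (ξ₂ ^ 4 - 1) / (ξ₂ ^ 2 * (ξ₁ ^ 4 - 1)) =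
      (ξ₂ ^ 2 - 1) / (2 * ξ₂) * ((ξ₂ ^ 2 + 1) / (2 * ξ₂)) /
        ((ξ₁ ^ 2 - 1) / (2 * ξ₁) * ((ξ₁ ^ 2 + 1) / (2 * ξ₁))) := by
    field_simp
    ring
  have hℓ : -((ξ₁ ^ 2 - 1) * (ξ₂ ^ 2 - 1)) / ((ξ₁ ^ 2 + 1) * (ξ₂ ^ 2 + 1)) =
      -((ξ₁ ^ 2 - 1) / (2 * ξ₁) * ((ξ₂ ^ 2 - 1) / (2 * ξ₂))) /
        ((ξ₁ ^ 2 + 1) / (2 * ξ₁) * ((ξ₂ ^ 2 + 1) / (2 * ξ₂))) := by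
    field_simp
  rw [hβ, hℓ]
  exact coeff_identities_of_sq_sub_sq_eq_one
    (sq_add_one_div_sq_sub_sq_sub_one_div_sq hξ₁0) (sq_add_one_div_sq_sub_sq_sub_one_div_sq hξ₂0)
    (div_ne_zero hm₁ h2ξ₁) (div_ne_zero hp₁ h2ξ₁) (div_ne_zero hp₂ h2ξ₂)

theorem stmt_7_general (n : ℕ) (c : Fin n → ℂ) (ξ₁ ξ₂ : ℂ)
    (hξ₁0 : ξ₁ ≠ 0) (hξ₂0 : ξ₂ ≠ 0) (hξ₁4 : ξ₁ ^ 4 ≠ 1) (hξ₂4 : ξ₂ ^ 4 ≠ 1)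
    (a : Fin n → ℂ) (L : (Fin n → ℂ) → ℂ) (hL : ∀ z, L z = ∑ j, a j * z j)
    (Φ : (Fin n → ℂ) → ℂ)
    (hΦper : ∀ z, Φ (z + c) = Φ z)
    (B₁ B₂ : ℂ)
    (hLc : Complex.exp (L c) =
      -((ξ₁ ^ 2 - 1) * (ξ₂ ^ 2 - 1)) / ((ξ₁ ^ 2 + 1) * (ξ₂ ^ 2 + 1)))
    (hB : Complex.exp (B₁ - B₂) = ξ₁ ^ 2 * (ξ₂ ^ 4 - 1) / (ξ₂ ^ 2 * (ξ₁ ^ 4 - 1)))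
    (f₁ f₂ : (Fin n → ℂ) → ℂ)
    (hf₁ : ∀ z, f₁ z = ((ξ₁ ^ 2 + 1) / (2 * ξ₁)) * Complex.exp ((L z + Φ z + B₁) / 2))
    (hf₂ : ∀ z, f₂ z = ((ξ₂ ^ 2 + 1) / (2 * ξ₂)) * Complex.exp ((L z + Φ z + B₂) / 2)) :
    ∀ z, f₁ z ^ 2 + f₂ (z + c) ^ 2 = Complex.exp (L z + Φ z + B₁) ∧
         f₂ z ^ 2 + f₁ (z + c) ^ 2 = Complex.exp (L z + Φ z + B₂) := by
  have hshift : ∀ z, L (z + c) + Φ (z + c) = L z + Φ z + L c := fun z => by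
    simp only [hL, hΦper, Pi.add_apply, mul_add, Finset.sum_add_distrib]
    ring
  obtain ⟨h₁, h₂⟩ := fermat_coeff_identities hξ₁0 hξ₂0 hξ₁4 hξ₂4
  rw [← hLc, ← hB] at h₁ h₂
  intro z
  simp only [hf₁, hf₂]
  exact fermat_system_of_map_add_eq_add_const c (fun z => L z + Φ z) (L c) hshift _ _ B₁ B₂ h₁ h₂ z

/-- Verification direction of Theorem 1, conclusion (i). -/
theorem stmt_7 (n : ℕ) (hn : 1 ≤ n) (c : Fin n → ℂ) (ξ₁ ξ₂ : ℂ)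
    (hξ₁0 : ξ₁ ≠ 0) (hξ₂0 : ξ₂ ≠ 0) (hξ₁4 : ξ₁ ^ 4 ≠ 1) (hξ₂4 : ξ₂ ^ 4 ≠ 1)
    (a : Fin n → ℂ) (L : (Fin n → ℂ) → ℂ) (hL : ∀ z, L z = ∑ j, a j * z j)
    (Φ : (Fin n → ℂ) → ℂ)
    (hΦpoly : ∃ p : MvPolynomial (Fin n) ℂ, ∀ z, Φ z = MvPolynomial.eval z p)
    (hΦper : ∀ z, Φ (z + c) = Φ z)
    (B₁ B₂ : ℂ)
    (hLc : Complex.exp (L c) =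
      -((ξ₁ ^ 2 - 1) * (ξ₂ ^ 2 - 1)) / ((ξ₁ ^ 2 + 1) * (ξ₂ ^ 2 + 1)))
    (hB : Complex.exp (B₁ - B₂) = ξ₁ ^ 2 * (ξ₂ ^ 4 - 1) / (ξ₂ ^ 2 * (ξ₁ ^ 4 - 1)))
    (f₁ f₂ : (Fin n → ℂ) → ℂ)
    (hf₁ : ∀ z, f₁ z = ((ξ₁ ^ 2 + 1) / (2 * ξ₁)) * Complex.exp ((L z + Φ z + B₁) / 2))
    (hf₂ : ∀ z, f₂ z = ((ξ₂ ^ 2 + 1) / (2 * ξ₂)) * Complex.exp ((L z + Φ z + B₂) / 2)) :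
    ∀ z, f₁ z ^ 2 + f₂ (z + c) ^ 2 = Complex.exp (L z + Φ z + B₁) ∧
         f₂ z ^ 2 + f₁ (z + c) ^ 2 = Complex.exp (L z + Φ z + B₂) :=
  stmt_7_general n c ξ₁ ξ₂ hξ₁0 hξ₂0 hξ₁4 hξ₂4 a L hL Φ hΦper B₁ B₂ hLc hB f₁ f₂ hf₁ hf₂
end

section
/- (Verification direction of Theorem 1, conclusion (ii).) Let n ≥ 1, c ∈ ℂⁿ, let L₁(z) = Σⱼ a₁ⱼ zⱼ and L₂(z) = Σⱼ a₂ⱼ zⱼ with a₁ⱼ, a₂ⱼ ∈ ℂ, let Φ, Ψ : ℂⁿ → ℂ be c-periodic polynomial functions, and let B₁, B₂, B₃, B₄ ∈ ℂ satisfy one of the following four sets of relations: (a) e^{L₁(c)} = i, e^{L₂(c)} = i, e^{B₁−B₂} = −1, e^{B₃−B₄} = 1; (b) e^{L₁(c)} = i, e^{L₂(c)} = −i, e^{B₁−B₂} = −1, e^{B₃−B₄} = −1; (c) e^{L₁(c)} = −i, e^{L₂(c)} = i, e^{B₁−B₂} = 1, e^{B₃−B₄} = 1; (d) e^{L₁(c)}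 = −i, e^{L₂(c)} = −i, e^{B₁−B₂} = 1, e^{B₃−B₄} = −1. Define f₁(z) = (1/2)(e^{L₁(z)+Φ(z)+B₁} + e^{L₂(z)+Ψ(z)+B₃}) and f₂(z) = (1/2)(e^{L₁(z)+Φ(z)+B₂} + e^{L₂(z)+Ψ(z)+B₄}). Then for all z ∈ ℂⁿ: f₁(z)² + f₂(z + c)² = e^{L₁(z)+L₂(z)+Φ(z)+Ψ(z)+B₁+B₃} and f₂(z)² + f₁(z + c)² = e^{L₁(z)+L₂(z)+Φ(z)+Ψ(z)+B₂+B₄}. -/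
open Complex

/-! Write `x = e^{L₁(z)+Φ(z)+B₂}`, `y = e^{L₂(z)+Ψ(z)+B₄}`, `p = e^{L₁(c)}`, `q = e^{L₂(c)}`,
`r = e^{B₁-B₂}`, `s = e^{B₃-B₄}`. Linearity of `L₁, L₂` and periodicity of `Φ, Ψ` give
`f₁(z) = (r x + s y)/2`, `f₂(z + c) = (p x + q y)/2`, `f₂(z) = (x + y)/2`,
`f₁(z + c) = (p r x + q s y)/2`, and in each of the four cases
`p² = q² = -1`, `r² = s² = 1`, `p q = r s`, which turns both equations into ring identities. -/

theorem map_add_of_eq_sum_mul {ι R : Type*} [Fintype ι] [CommSemiring R] {L : (ι → R) → R}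
    {a : ι → R} (hL : ∀ z, L z = ∑ j, a j * z j) (z w : ι → R) :
    L (z + w) = L z + L w := by
  simp only [hL, Pi.add_apply, mul_add, Finset.sum_add_distrib]

theorem sq_and_mul_relations_of_cases {p q r s : ℂ}
    (h : (p = I ∧ q = I ∧ r = -1 ∧ s = 1) ∨ (p = I ∧ q = -I ∧ r = -1 ∧ s = -1) ∨
      (p = -I ∧ q = I ∧ r = 1 ∧ s = 1) ∨ (p = -I ∧ q = -I ∧ r = 1 ∧ s = -1)) :
    p ^ 2 = -1 ∧ q ^ 2 = -1 ∧ r ^ 2 = 1 ∧ s ^ 2 = 1 ∧ p * q = r * s := by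
  rcases h with ⟨rfl, rfl, rfl, rfl⟩ | ⟨rfl, rfl, rfl, rfl⟩ | ⟨rfl, rfl, rfl, rfl⟩ |
      ⟨rfl, rfl, rfl, rfl⟩ <;> simp

section Identities

variable {R : Type*} [CommRing R] {p q r s : R}

theorem add_sq_add_add_sq_eq (hp : p ^ 2 = -1) (hq : q ^ 2 = -1) (hr : r ^ 2 = 1)
    (hs : s ^ 2 = 1) (hpq : p * q = r * s) (x y : R) :
    (r * x + s * y) ^ 2 + (p * x + q * y) ^ 2 = 4 * (r * s * x * y) := by
  linear_combination x ^ 2 * (hr + hp) + y ^ 2 * (hs + hq) + (2 * x * y) * hpq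

theorem add_sq_add_mul_add_sq_eq (hp : p ^ 2 = -1) (hq : q ^ 2 = -1) (hr : r ^ 2 = 1)
    (hs : s ^ 2 = 1) (hpq : p * q = r * s) (x y : R) :
    (x + y) ^ 2 + (p * r * x + q * s * y) ^ 2 = 4 * (x * y) := by
  linear_combination (r ^ 2 * x ^ 2 + 2 * q ^ 2 * x * y) * hp - x ^ 2 * hr
    + (s ^ 2 * y ^ 2 - 2 * x * y) * hq - y ^ 2 * hs - (2 * p * q * x * y) * hpq

end Identities

theorem stmt_8_general (n : ℕ) (c : Fin n → ℂ)
    (a₁ a₂ : Fin n → ℂ) (L₁ L₂ : (Fin n → ℂ) → ℂ)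
    (hL₁ : ∀ z, L₁ z = ∑ j, a₁ j * z j) (hL₂ : ∀ z, L₂ z = ∑ j, a₂ j * z j)
    (Φ Ψ : (Fin n → ℂ) → ℂ)
    (hΦper : ∀ z, Φ (z + c) = Φ z) (hΨper : ∀ z, Ψ (z + c) = Ψ z)
    (B₁ B₂ B₃ B₄ : ℂ)
    (hcases :
      (Complex.exp (L₁ c) = I ∧ Complex.exp (L₂ c) = I ∧
        Complex.exp (B₁ - B₂) = -1 ∧ Complex.exp (B₃ - B₄) = 1) ∨
      (Complex.exp (L₁ c) = I ∧ Complex.exp (L₂ c) = -I ∧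
        Complex.exp (B₁ - B₂) = -1 ∧ Complex.exp (B₃ - B₄) = -1) ∨
      (Complex.exp (L₁ c) = -I ∧ Complex.exp (L₂ c) = I ∧
        Complex.exp (B₁ - B₂) = 1 ∧ Complex.exp (B₃ - B₄) = 1) ∨
      (Complex.exp (L₁ c) = -I ∧ Complex.exp (L₂ c) = -I ∧
        Complex.exp (B₁ - B₂) = 1 ∧ Complex.exp (B₃ - B₄) = -1))
    (f₁ f₂ : (Fin n → ℂ) → ℂ)
    (hf₁ : ∀ z, f₁ z = (1 / 2) *
      (Complex.exp (L₁ z + Φ z + B₁) + Complex.exp (L₂ z + Ψ z + B₃)))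
    (hf₂ : ∀ z, f₂ z = (1 / 2) *
      (Complex.exp (L₁ z + Φ z + B₂) + Complex.exp (L₂ z + Ψ z + B₄))) :
    ∀ z, f₁ z ^ 2 + f₂ (z + c) ^ 2 =
            Complex.exp (L₁ z + L₂ z + Φ z + Ψ z + B₁ + B₃) ∧
         f₂ z ^ 2 + f₁ (z + c) ^ 2 =
            Complex.exp (L₁ z + L₂ z + Φ z + Ψ z + B₂ + B₄) := by
  obtain ⟨hp, hq, hr, hs, hpq⟩ := sq_and_mul_relations_of_cases hcases
  intro z
  set x := exp (L₁ z + Φ z + B₂) with hx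
  set y := exp (L₂ z + Ψ z + B₄) with hy
  have hf₁z : f₁ z = 1 / 2 * (exp (B₁ - B₂) * x + exp (B₃ - B₄) * y) := by
    simp only [hf₁, hx, hy, ← exp_add]; ring_nf
  have hf₁zc : f₁ (z + c) =
      1 / 2 * (exp (L₁ c) * exp (B₁ - B₂) * x + exp (L₂ c) * exp (B₃ - B₄) * y) := by
    simp only [hf₁, map_add_of_eq_sum_mul hL₁, map_add_of_eq_sum_mul hL₂, hΦper, hΨper, hx, hy,
      ← exp_add]
    ring_nf
  have hf₂zc : f₂ (z + c) = 1 / 2 * (exp (L₁ c) * x + exp (L₂ c) * y) := by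
    simp only [hf₂, map_add_of_eq_sum_mul hL₁, map_add_of_eq_sum_mul hL₂, hΦper, hΨper, hx, hy,
      ← exp_add]
    ring_nf
  have h₁₃ : exp (L₁ z + L₂ z + Φ z + Ψ z + B₁ + B₃) =
      exp (B₁ - B₂) * exp (B₃ - B₄) * x * y := by
    simp only [hx, hy, ← exp_add]; ring_nf
  have h₂₄ : exp (L₁ z + L₂ z + Φ z + Ψ z + B₂ + B₄) = x * y := by
    simp only [hx, hy, ← exp_add]; ring_nf
  rw [hf₁z, hf₁zc, hf₂zc, hf₂, h₁₃, h₂₄]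
  exact ⟨by linear_combination add_sq_add_add_sq_eq hp hq hr hs hpq x y / 4,
    by linear_combination add_sq_add_mul_add_sq_eq hp hq hr hs hpq x y / 4⟩

/-- Verification direction of Theorem 1, conclusion (ii). -/
theorem stmt_8 (n : ℕ) (hn : 1 ≤ n) (c : Fin n → ℂ)
    (a₁ a₂ : Fin n → ℂ) (L₁ L₂ : (Fin n → ℂ) → ℂ)
    (hL₁ : ∀ z, L₁ z = ∑ j, a₁ j * z j) (hL₂ : ∀ z, L₂ z = ∑ j, a₂ j * z j)
    (Φ Ψ : (Fin n → ℂ) → ℂ)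
    (hΦpoly : ∃ p : MvPolynomial (Fin n) ℂ, ∀ z, Φ z = MvPolynomial.eval z p)
    (hΨpoly : ∃ p : MvPolynomial (Fin n) ℂ, ∀ z, Ψ z = MvPolynomial.eval z p)
    (hΦper : ∀ z, Φ (z + c) = Φ z) (hΨper : ∀ z, Ψ (z + c) = Ψ z)
    (B₁ B₂ B₃ B₄ : ℂ)
    (hcases :
      (Complex.exp (L₁ c) = I ∧ Complex.exp (L₂ c) = I ∧
        Complex.exp (B₁ - B₂) = -1 ∧ Complex.exp (B₃ - B₄) = 1) ∨
      (Complex.exp (L₁ c) = I ∧ Complex.exp (L₂ c) = -I ∧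
        Complex.exp (B₁ - B₂) = -1 ∧ Complex.exp (B₃ - B₄) = -1) ∨
      (Complex.exp (L₁ c) = -I ∧ Complex.exp (L₂ c) = I ∧
        Complex.exp (B₁ - B₂) = 1 ∧ Complex.exp (B₃ - B₄) = 1) ∨
      (Complex.exp (L₁ c) = -I ∧ Complex.exp (L₂ c) = -I ∧
        Complex.exp (B₁ - B₂) = 1 ∧ Complex.exp (B₃ - B₄) = -1))
    (f₁ f₂ : (Fin n → ℂ) → ℂ)
    (hf₁ : ∀ z, f₁ z = (1 / 2) *
      (Complex.exp (L₁ z + Φ z + B₁) + Complex.exp (L₂ z + Ψ z + B₃)))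
    (hf₂ : ∀ z, f₂ z = (1 / 2) *
      (Complex.exp (L₁ z + Φ z + B₂) + Complex.exp (L₂ z + Ψ z + B₄))) :
    ∀ z, f₁ z ^ 2 + f₂ (z + c) ^ 2 =
            Complex.exp (L₁ z + L₂ z + Φ z + Ψ z + B₁ + B₃) ∧
         f₂ z ^ 2 + f₁ (z + c) ^ 2 =
            Complex.exp (L₁ z + L₂ z + Φ z + Ψ z + B₂ + B₄) :=
  stmt_8_general n c a₁ a₂ L₁ L₂ hL₁ hL₂ Φ Ψ hΦper hΨper B₁ B₂ B₃ B₄ hcases f₁ f₂ hf₁ hf₂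
end

section
/- (Verification direction of Theorem 2, conclusion (ii).) Let c = (c₁, c₂) ∈ ℂ², k a positive integer, L₁(z) = a₁₁z₁ + a₁₂z₂ and L₂(z) = a₂₁z₁ + a₂₂z₂ with a₁₁, a₁₂, a₂₁, a₂₂ ∈ ℂ, let H₁, H₂ : ℂ → ℂ be one-variable polynomial functions with Hⱼ(z₂ + c₂) = Hⱼ(z₂) for all z₂ (j = 1, 2), and let B₁, B₂, B₃, B₄ ∈ ℂ satisfy one of: (a) e^{L₁(c)} = i·a₁₁ᵏ, e^{L₂(c)} = i·a₂₁ᵏ, e^{B₁−B₂} = −1, e^{B₃−B₄} = 1; (b) e^{L₁(c)} = i·a₁₁ᵏ, e^{L₂(c)} = −i·a₂₁ᵏ, e^{B₁−B₂} = −1, e^{B₃−B₄} = −1; (c) e^{L₁(c)} = −i·a₁₁ᵏ, e^{L₂(c)} = i·a₂₁ᵏ, e^{B₁−B₂} = 1, e^{B₃−B₄} = 1; (d) e^{L₁(c)} = −i·a₁₁ᵏ, e^{L₂(c)} = −i·a₂₁ᵏ, e^{B₁−B₂} = 1, e^{B₃−B₄} = −1. Define f₁(z) = (1/(2i))(e^{L₁(z)+H₁(z₂)−L₁(c)+B₂}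 − e^{L₂(z)+H₂(z₂)−L₂(c)+B₄}) and f₂(z) = (1/(2i))(e^{L₁(z)+H₁(z₂)−L₁(c)+B₁} − e^{L₂(z)+H₂(z₂)−L₂(c)+B₃}). Then for all z ∈ ℂ²: (∂ᵏf₁/∂z₁ᵏ)(z)² + f₂(z + c)² = e^{L₁(z)+L₂(z)+H₁(z₂)+H₂(z₂)+B₁+B₃} and (∂ᵏf₂/∂z₁ᵏ)(z)² + f₁(z + c)² = e^{L₁(z)+L₂(z)+H₁(z₂)+H₂(z₂)+B₂+B₄}. -/
/-!
For fixed `z₂` both `fᵢ` are combinations of the exponentials `exp (a₁₁ z₁ + ⋯)` and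
`exp (a₂₁ z₁ + ⋯)`, so `∂ᵏ/∂z₁ᵏ` multiplies the two modes by `a₁₁ᵏ` and `a₂₁ᵏ`, while the shift
`z ↦ z + c` multiplies them by `exp (L₁ c)` and `exp (L₂ c)` (the `Hⱼ` being `c₂`-periodic).
In each of the four cases the conditions on `exp (Lⱼ c)` and `exp (B − B')` make the two effects
agree up to the factor `±i`, so with `A = exp (L₁ z + H₁ z₂ + B₁)`, `B = exp (L₂ z + H₂ z₂ + B₃)`
one gets `∂ᵏf₁(z) = (A + B) / 2` and `f₂(z + c) = (A − B) / (2i)`, whose squares add up to `A B`;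
the second equation is the same with `B₁, B₃` and `B₂, B₄` exchanged.
-/

open Complex

theorem iteratedDeriv_cexp_affine {φ : ℂ → ℂ} {a b : ℂ} (hφ : ∀ t, φ t = a * t + b) (n : ℕ) :
    iteratedDeriv n (fun t => exp (φ t)) = fun t => a ^ n * exp (φ t) := by
  have hsplit : (fun t => exp (φ t)) = fun t => exp b * exp (a * t) := by
    funext t
    rw [hφ, add_comm, exp_add]
  funext t
  rw [hsplit, iteratedDeriv_const_mul_field, iteratedDeriv_cexp_const_mul, hφ, add_comm, exp_add]
  ring

theorem contDiff_cexp_affine {φ : ℂ → ℂ} {a b : ℂ} (hφ : ∀ t, φ t = a * t + b)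
    (n : WithTop ℕ∞) :
    ContDiff ℂ n (fun t => exp (φ t)) := by
  obtain rfl : φ = fun t => a * t + b := funext hφ
  fun_prop

theorem iteratedDeriv_const_mul_cexp_sub_cexp {φ ψ : ℂ → ℂ} {a b a' b' : ℂ}
    (hφ : ∀ t, φ t = a * t + b) (hψ : ∀ t, ψ t = a' * t + b') (C : ℂ) (n : ℕ) (t : ℂ) :
    iteratedDeriv n (fun t => C * (exp (φ t) - exp (ψ t))) t =
      C * (a ^ n * exp (φ t) - a' ^ n * exp (ψ t)) := by
  rw [iteratedDeriv_const_mul_field, iteratedDeriv_fun_sub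
    ((contDiff_cexp_affine hφ n).contDiffAt) ((contDiff_cexp_affine hψ n).contDiffAt),
    iteratedDeriv_cexp_affine hφ, iteratedDeriv_cexp_affine hψ]

/-- Read with `x = aᵏ`, `p = L c`: differentiating the mode with constant `B'` `k` times gives
`ω` times the `c`-shifted mode with constant `B`, and vice versa. -/
theorem mul_cexp_sub_add_eq {ω x p B B' : ℂ} (hω : ω ^ 2 = -1)
    (h : (exp p = ω * x ∧ exp (B - B') = -1) ∨ (exp p = -(ω * x) ∧ exp (B - B') = 1))
    (w : ℂ) :
    x * exp (w - p + B') = ω * exp (w + B) ∧ x * exp (w - p + B) = ω * exp (w + B') := by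
  obtain ⟨hB', hB⟩ : x * exp B' = ω * exp p * exp B ∧ x * exp B = ω * exp p * exp B' := by
    rcases h with ⟨hp, hBB'⟩ | ⟨hp, hBB'⟩ <;>
      rw [exp_sub, div_eq_iff (exp_ne_zero _)] at hBB' <;> rw [hp, hBB'] <;> constructor <;>
      first | linear_combination x * exp B' * hω | linear_combination -x * exp B' * hω
  have hshift : ∀ V, exp (w - p + V) * exp p = exp w * exp V := fun V => by
    rw [← exp_add, ← exp_add]; ring_nf
  constructor <;> apply mul_right_cancel₀ (exp_ne_zero p)
  · linear_combination x * hshift B' + exp w * hB' - ω * exp p * exp_add w B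
  · linear_combination x * hshift B + exp w * hB - ω * exp p * exp_add w B'

theorem sq_add_sq_eq_mul (A B : ℂ) :
    ((1 / (2 * I)) * (I * A - -I * B)) ^ 2 + ((1 / (2 * I)) * (A - B)) ^ 2 = A * B := by
  field_simp
  linear_combination (A - B) ^ 2 * I_sq

theorem stmt_11_general (c : ℂ × ℂ) (k : ℕ)
    (a₁₁ a₁₂ a₂₁ a₂₂ : ℂ) (L₁ L₂ : ℂ × ℂ → ℂ)
    (hL₁ : ∀ z : ℂ × ℂ, L₁ z = a₁₁ * z.1 + a₁₂ * z.2)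
    (hL₂ : ∀ z : ℂ × ℂ, L₂ z = a₂₁ * z.1 + a₂₂ * z.2)
    (H₁ H₂ : ℂ → ℂ)
    (hH₁per : ∀ t : ℂ, H₁ (t + c.2) = H₁ t)
    (hH₂per : ∀ t : ℂ, H₂ (t + c.2) = H₂ t)
    (B₁ B₂ B₃ B₄ : ℂ)
    (hcases :
      (Complex.exp (L₁ c) = I * a₁₁ ^ k ∧ Complex.exp (L₂ c) = I * a₂₁ ^ k ∧
        Complex.exp (B₁ - B₂) = -1 ∧ Complex.exp (B₃ - B₄) = 1) ∨
      (Complex.exp (L₁ c) = I * a₁₁ ^ k ∧ Complex.exp (L₂ c) = -(I * a₂₁ ^ k) ∧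
        Complex.exp (B₁ - B₂) = -1 ∧ Complex.exp (B₃ - B₄) = -1) ∨
      (Complex.exp (L₁ c) = -(I * a₁₁ ^ k) ∧ Complex.exp (L₂ c) = I * a₂₁ ^ k ∧
        Complex.exp (B₁ - B₂) = 1 ∧ Complex.exp (B₃ - B₄) = 1) ∨
      (Complex.exp (L₁ c) = -(I * a₁₁ ^ k) ∧ Complex.exp (L₂ c) = -(I * a₂₁ ^ k) ∧
        Complex.exp (B₁ - B₂) = 1 ∧ Complex.exp (B₃ - B₄) = -1))
    (f₁ f₂ : ℂ × ℂ → ℂ)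
    (hf₁ : ∀ z : ℂ × ℂ, f₁ z = (1 / (2 * I)) *
      (Complex.exp (L₁ z + H₁ z.2 - L₁ c + B₂) - Complex.exp (L₂ z + H₂ z.2 - L₂ c + B₄)))
    (hf₂ : ∀ z : ℂ × ℂ, f₂ z = (1 / (2 * I)) *
      (Complex.exp (L₁ z + H₁ z.2 - L₁ c + B₁) - Complex.exp (L₂ z + H₂ z.2 - L₂ c + B₃))) :
    ∀ z : ℂ × ℂ,
      (iteratedDeriv k (fun t => f₁ (t, z.2)) z.1) ^ 2 + f₂ (z + c) ^ 2 =
        Complex.exp (L₁ z + L₂ z + H₁ z.2 + H₂ z.2 + B₁ + B₃) ∧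
      (iteratedDeriv k (fun t => f₂ (t, z.2)) z.1) ^ 2 + f₁ (z + c) ^ 2 =
        Complex.exp (L₁ z + L₂ z + H₁ z.2 + H₂ z.2 + B₂ + B₄) := by
  obtain ⟨ε₁, ε₂, hε₁, hε₂, hP, hQ, h12, h34⟩ :
      ∃ ε₁ ε₂ : ℂ, (ε₁ = 1 ∨ ε₁ = -1) ∧ (ε₂ = 1 ∨ ε₂ = -1) ∧
        Complex.exp (L₁ c) = ε₁ * (I * a₁₁ ^ k) ∧
        Complex.exp (L₂ c) = ε₂ * (I * a₂₁ ^ k) ∧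
        Complex.exp (B₁ - B₂) = -ε₁ ∧ Complex.exp (B₃ - B₄) = ε₂ := by
    rcases hcases with ⟨h1,h2,h3,h4⟩ | ⟨h1,h2,h3,h4⟩ | ⟨h1,h2,h3,h4⟩ | ⟨h1,h2,h3,h4⟩
    · exact ⟨1, 1, Or.inl rfl, Or.inl rfl, by simpa using h1, by simpa using h2,
        by simpa using h3, by simpa using h4⟩
    · exact ⟨1, -1, Or.inl rfl, Or.inr rfl, by simpa using h1, by rw [h2]; ring,
        by simpa using h3, by simpa using h4⟩
    · exact ⟨-1, 1, Or.inr rfl, Or.inl rfl, by rw [h1]; ring, by simpa using h2,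
        by simpa using h3, by simpa using h4⟩
    · exact ⟨-1, -1, Or.inr rfl, Or.inr rfl, by rw [h1]; ring, by rw [h2]; ring,
        by simpa using h3, by simpa using h4⟩
  have hPne : Complex.exp (L₁ c) ≠ 0 := Complex.exp_ne_zero _
  have hQne : Complex.exp (L₂ c) ≠ 0 := Complex.exp_ne_zero _
  have hAk : (a₁₁ : ℂ) ^ k = -ε₁ * I * Complex.exp (L₁ c) := by
    rcases hε₁ with rfl | rfl <;> rw [hP] <;> linear_combination (a₁₁^k) * Complex.I_sq
  have hBk : (a₂₁ : ℂ) ^ k = -ε₂ * I * Complex.exp (L₂ c) := by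
    rcases hε₂ with rfl | rfl <;> rw [hQ] <;> linear_combination (a₂₁^k) * Complex.I_sq
  have hb1 : Complex.exp B₁ = -ε₁ * Complex.exp B₂ := by
    rw [Complex.exp_sub, div_eq_iff (Complex.exp_ne_zero _)] at h12
    rw [h12]
  have hb3 : Complex.exp B₃ = ε₂ * Complex.exp B₄ := by
    rw [Complex.exp_sub, div_eq_iff (Complex.exp_ne_zero _)] at h34
    rw [h34]
  intro z
  have hsign₁ : (exp (L₁ c) = I * a₁₁ ^ k ∧ exp (B₁ - B₂) = -1) ∨
      (exp (L₁ c) = -(I * a₁₁ ^ k) ∧ exp (B₁ - B₂) = 1) := by tauto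
  have hsign₂ : (exp (L₂ c) = -I * a₂₁ ^ k ∧ exp (B₃ - B₄) = -1) ∨
      (exp (L₂ c) = -(-I * a₂₁ ^ k) ∧ exp (B₃ - B₄) = 1) := by
    simp only [neg_mul, neg_neg]; tauto
  obtain ⟨hB₂, hB₁⟩ := mul_cexp_sub_add_eq I_sq hsign₁ (L₁ z + H₁ z.2)
  obtain ⟨hB₄, hB₃⟩ := mul_cexp_sub_add_eq (by rw [neg_sq, I_sq]) hsign₂ (L₂ z + H₂ z.2)
  have hderiv : ∀ B B', iteratedDeriv k (fun t => (1 / (2 * I)) *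
      (exp (L₁ (t, z.2) + H₁ z.2 - L₁ c + B) - exp (L₂ (t, z.2) + H₂ z.2 - L₂ c + B'))) z.1 =
      (1 / (2 * I)) * (a₁₁ ^ k * exp (L₁ z + H₁ z.2 - L₁ c + B) -
        a₂₁ ^ k * exp (L₂ z + H₂ z.2 - L₂ c + B')) := fun B B' =>
    iteratedDeriv_const_mul_cexp_sub_cexp (b := a₁₂ * z.2 + H₁ z.2 - L₁ c + B)
      (b' := a₂₂ * z.2 + H₂ z.2 - L₂ c + B') (fun t => by rw [hL₁]; ring)
      (fun t => by rw [hL₂]; ring) _ _ _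
  have hshift₁ : ∀ B, L₁ (z + c) + H₁ (z + c).2 - L₁ c + B = L₁ z + H₁ z.2 + B := fun B => by
    simp only [hL₁, Prod.fst_add, Prod.snd_add, hH₁per]; ring
  have hshift₂ : ∀ B, L₂ (z + c) + H₂ (z + c).2 - L₂ c + B = L₂ z + H₂ z.2 + B := fun B => by
    simp only [hL₂, Prod.fst_add, Prod.snd_add, hH₂per]; ring
  simp only [hf₁, hf₂, hderiv, hshift₁, hshift₂]
  rw [hB₁, hB₂, hB₃, hB₄, sq_add_sq_eq_mul, sq_add_sq_eq_mul, ← exp_add, ← exp_add]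
  constructor <;> congr 1 <;> ring

/-- Verification direction of Theorem 2, conclusion (ii). -/
theorem stmt_11 (c : ℂ × ℂ) (k : ℕ) (hk : 0 < k)
    (a₁₁ a₁₂ a₂₁ a₂₂ : ℂ) (L₁ L₂ : ℂ × ℂ → ℂ)
    (hL₁ : ∀ z : ℂ × ℂ, L₁ z = a₁₁ * z.1 + a₁₂ * z.2)
    (hL₂ : ∀ z : ℂ × ℂ, L₂ z = a₂₁ * z.1 + a₂₂ * z.2)
    (H₁ H₂ : ℂ → ℂ)
    (hH₁poly : ∃ h : Polynomial ℂ, ∀ t, H₁ t = Polynomial.eval t h)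
    (hH₂poly : ∃ h : Polynomial ℂ, ∀ t, H₂ t = Polynomial.eval t h)
    (hH₁per : ∀ t : ℂ, H₁ (t + c.2) = H₁ t)
    (hH₂per : ∀ t : ℂ, H₂ (t + c.2) = H₂ t)
    (B₁ B₂ B₃ B₄ : ℂ)
    (hcases :
      (Complex.exp (L₁ c) = I * a₁₁ ^ k ∧ Complex.exp (L₂ c) = I * a₂₁ ^ k ∧
        Complex.exp (B₁ - B₂) = -1 ∧ Complex.exp (B₃ - B₄) = 1) ∨
      (Complex.exp (L₁ c) = I * a₁₁ ^ k ∧ Complex.exp (L₂ c) = -(I * a₂₁ ^ k) ∧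
        Complex.exp (B₁ - B₂) = -1 ∧ Complex.exp (B₃ - B₄) = -1) ∨
      (Complex.exp (L₁ c) = -(I * a₁₁ ^ k) ∧ Complex.exp (L₂ c) = I * a₂₁ ^ k ∧
        Complex.exp (B₁ - B₂) = 1 ∧ Complex.exp (B₃ - B₄) = 1) ∨
      (Complex.exp (L₁ c) = -(I * a₁₁ ^ k) ∧ Complex.exp (L₂ c) = -(I * a₂₁ ^ k) ∧
        Complex.exp (B₁ - B₂) = 1 ∧ Complex.exp (B₃ - B₄) = -1))
    (f₁ f₂ : ℂ × ℂ → ℂ)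
    (hf₁ : ∀ z : ℂ × ℂ, f₁ z = (1 / (2 * I)) *
      (Complex.exp (L₁ z + H₁ z.2 - L₁ c + B₂) - Complex.exp (L₂ z + H₂ z.2 - L₂ c + B₄)))
    (hf₂ : ∀ z : ℂ × ℂ, f₂ z = (1 / (2 * I)) *
      (Complex.exp (L₁ z + H₁ z.2 - L₁ c + B₁) - Complex.exp (L₂ z + H₂ z.2 - L₂ c + B₃))) :
    ∀ z : ℂ × ℂ,
      (iteratedDeriv k (fun t => f₁ (t, z.2)) z.1) ^ 2 + f₂ (z + c) ^ 2 =
        Complex.exp (L₁ z + L₂ z + H₁ z.2 + H₂ z.2 + B₁ + B₃) ∧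
      (iteratedDeriv k (fun t => f₂ (t, z.2)) z.1) ^ 2 + f₁ (z + c) ^ 2 =
        Complex.exp (L₁ z + L₂ z + H₁ z.2 + H₂ z.2 + B₂ + B₄) :=
  stmt_11_general c k a₁₁ a₁₂ a₂₁ a₂₂ L₁ L₂ hL₁ hL₂ H₁ H₂ hH₁per hH₂per B₁ B₂ B₃ B₄ hcases f₁ f₂ hf₁
    hf₂
end

section
/- (Verification direction of Theorem 2, conclusion (iii).) Let c = (c₁, c₂) ∈ ℂ², k a positive integer, L₁(z) = a₁₁z₁ + a₁₂z₂ and L₂(z) = a₂₁z₁ + a₂₂z₂ with a₁₁, a₁₂, a₂₁, a₂₂ ∈ ℂ, let H₁, H₂ : ℂ → ℂ be one-variable polynomial functions with Hⱼ(z₂ + c₂) = Hⱼ(z₂) for all z₂ (j = 1, 2), and let B₁, B₂, B₃, B₄ ∈ ℂ satisfy one of: (a) e^{L₁(c)} = a₁₁ᵏ, e^{L₂(c)} = a₂₁ᵏ, e^{B₁−B₂} = i, e^{B₃−B₄} = −i; (b) e^{L₁(c)} = a₁₁ᵏ, e^{L₂(c)} = −a₂₁ᵏ, e^{B₁−B₂}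 = i, e^{B₃−B₄} = i; (c) e^{L₁(c)} = −a₁₁ᵏ, e^{L₂(c)} = a₂₁ᵏ, e^{B₁−B₂} = −i, e^{B₃−B₄} = −i; (d) e^{L₁(c)} = −a₁₁ᵏ, e^{L₂(c)} = −a₂₁ᵏ, e^{B₁−B₂} = −i, e^{B₃−B₄} = i. Define f₁(z) = −(1/(2i))(e^{L₁(z)+H₁(z₂)−L₁(c)+B₂} − e^{L₂(z)+H₂(z₂)−L₂(c)+B₄}) and f₂(z) = (1/(2i))(e^{L₁(z)+H₁(z₂)−L₁(c)+B₁} − e^{L₂(z)+H₂(z₂)−L₂(c)+B₃}). Then for all z ∈ ℂ²: (∂ᵏf₁/∂z₁ᵏ)(z)² + f₂(z + c)² = e^{L₁(z)+L₂(z)+H₁(z₂)+H₂(z₂)+B₁+B₃} and (∂ᵏf₂/∂z₁ᵏ)(z)² + f₁(z + c)² = e^{L₁(z)+L₂(z)+H₁(z₂)+H₂(z₂)+B₂+B₄}. -/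
open Complex

/-! Along a slice `z₂ = const` each exponential `exp (Lⱼ z + Hⱼ z₂ - Lⱼ c + B)` is a constant times
`exp (aⱼ₁ z₁)`, so `∂ᵏ/∂z₁ᵏ` multiplies it by `aⱼ₁ ^ k`, while the shift `z ↦ z + c` multiplies it
by `exp (Lⱼ c)`, since `Lⱼ` is additive and `Hⱼ` is `c₂`-periodic. Both equations then become
polynomial identities in two exponentials, which only need the relations
`exp (Lⱼ c) ^ 2 = aⱼ₁ ^ (2k)`, `exp (B₁ - B₂) ^ 2 = exp (B₃ - B₄) ^ 2 = -1` and
`a₁₁ ^ k * a₂₁ ^ k = exp (B₁ - B₂) * exp (B₃ - B₄) * exp (L₁ c) * exp (L₂ c)`,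
common to the four sign patterns (a)–(d). -/

theorem iteratedDeriv_cexp_slice {L : ℂ × ℂ → ℂ} {a b : ℂ}
    (hL : ∀ z : ℂ × ℂ, L z = a * z.1 + b * z.2) (n : ℕ) (h l B w x : ℂ) :
    iteratedDeriv n (fun t => exp (L (t, w) + h - l + B)) x = a ^ n * exp (L (x, w) + h - l + B) := by
  have hsplit : ∀ t, exp (L (t, w) + h - l + B) = exp (b * w + h - l + B) * exp (a * t) := fun t => by
    rw [hL, ← exp_add]; ring_nf
  simp only [hsplit, iteratedDeriv_const_mul_field, iteratedDeriv_cexp_const_mul]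
  ring

theorem contDiff_cexp_slice {L : ℂ × ℂ → ℂ} {a b : ℂ}
    (hL : ∀ z : ℂ × ℂ, L z = a * z.1 + b * z.2) (n : ℕ) (h l B w : ℂ) :
    ContDiff ℂ n (fun t => exp (L (t, w) + h - l + B)) := by
  simp only [hL]; fun_prop

theorem iteratedDeriv_const_mul_cexp_slice_sub {L₁ L₂ : ℂ × ℂ → ℂ} {a₁ b₁ a₂ b₂ : ℂ}
    (hL₁ : ∀ z : ℂ × ℂ, L₁ z = a₁ * z.1 + b₁ * z.2) (hL₂ : ∀ z : ℂ × ℂ, L₂ z = a₂ * z.1 + b₂ * z.2)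
    (n : ℕ) (C h₁ h₂ l₁ l₂ B B' w x : ℂ) :
    iteratedDeriv n (fun t => C * (exp (L₁ (t, w) + h₁ - l₁ + B) - exp (L₂ (t, w) + h₂ - l₂ + B'))) x
      = C * (a₁ ^ n * exp (L₁ (x, w) + h₁ - l₁ + B) - a₂ ^ n * exp (L₂ (x, w) + h₂ - l₂ + B')) := by
  rw [iteratedDeriv_const_mul_field, iteratedDeriv_fun_sub
    (contDiff_cexp_slice hL₁ n _ _ _ _).contDiffAt (contDiff_cexp_slice hL₂ n _ _ _ _).contDiffAt,
    iteratedDeriv_cexp_slice hL₁, iteratedDeriv_cexp_slice hL₂]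

theorem cexp_shift_of_periodic {L : ℂ × ℂ → ℂ} {a b : ℂ} {H : ℂ → ℂ} {c : ℂ × ℂ}
    (hL : ∀ z : ℂ × ℂ, L z = a * z.1 + b * z.2) (hH : ∀ t, H (t + c.2) = H t) (z : ℂ × ℂ) (B : ℂ) :
    exp (L (z + c) + H (z + c).2 - L c + B) = exp (L c) * exp (L z + H z.2 - L c + B) := by
  rw [← exp_add, Prod.snd_add, hH, hL (z + c), hL z, hL c, Prod.fst_add, Prod.snd_add]
  ring_nf

theorem sign_relations_of_cases {E₁ E₂ α₁ α₂ ι₁ ι₂ : ℂ}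
    (h : (E₁ = α₁ ∧ E₂ = α₂ ∧ ι₁ = I ∧ ι₂ = -I) ∨ (E₁ = α₁ ∧ E₂ = -α₂ ∧ ι₁ = I ∧ ι₂ = I) ∨
      (E₁ = -α₁ ∧ E₂ = α₂ ∧ ι₁ = -I ∧ ι₂ = -I) ∨ (E₁ = -α₁ ∧ E₂ = -α₂ ∧ ι₁ = -I ∧ ι₂ = I)) :
    E₁ ^ 2 = α₁ ^ 2 ∧ E₂ ^ 2 = α₂ ^ 2 ∧ ι₁ ^ 2 = -1 ∧ ι₂ ^ 2 = -1 ∧ α₁ * α₂ = ι₁ * ι₂ * (E₁ * E₂) := by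
  rcases h with ⟨rfl, rfl, rfl, rfl⟩ | ⟨rfl, rfl, rfl, rfl⟩ | ⟨rfl, rfl, rfl, rfl⟩ | ⟨rfl, rfl, rfl, rfl⟩ <;>
  refine ⟨by ring, by ring, by simp, by simp, ?_⟩ <;> ring_nf <;> simp only [I_sq] <;> ring

theorem sq_add_sq_of_sign_relations {E₁ E₂ α₁ α₂ ι₁ ι₂ : ℂ} (hE₁ : E₁ ^ 2 = α₁ ^ 2)
    (hE₂ : E₂ ^ 2 = α₂ ^ 2) (hι₁ : ι₁ ^ 2 = -1) (hι₂ : ι₂ ^ 2 = -1)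
    (h : α₁ * α₂ = ι₁ * ι₂ * (E₁ * E₂)) (x₁ x₂ : ℂ) :
    (-(1 / (2 * I) * (α₁ * x₁ - α₂ * x₂))) ^ 2 + (1 / (2 * I) * (E₁ * (ι₁ * x₁) - E₂ * (ι₂ * x₂))) ^ 2
        = E₁ * (ι₁ * x₁) * (E₂ * (ι₂ * x₂)) ∧
      (1 / (2 * I) * (α₁ * (ι₁ * x₁) - α₂ * (ι₂ * x₂))) ^ 2 + (-(1 / (2 * I) * (E₁ * x₁ - E₂ * x₂))) ^ 2
        = E₁ * x₁ * (E₂ * x₂) := by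
  set C := 1 / (2 * I)
  have hC : C ^ 2 = -1 / 4 := by
    rw [div_pow, mul_pow, I_sq]; norm_num
  constructor
  · linear_combination C ^ 2 * E₁ ^ 2 * x₁ ^ 2 * hι₁ + C ^ 2 * E₂ ^ 2 * x₂ ^ 2 * hι₂
      - C ^ 2 * x₁ ^ 2 * hE₁ - C ^ 2 * x₂ ^ 2 * hE₂ - 2 * C ^ 2 * x₁ * x₂ * h
      - 4 * ι₁ * ι₂ * E₁ * E₂ * x₁ * x₂ * hC
  · linear_combination C ^ 2 * α₁ ^ 2 * x₁ ^ 2 * hι₁ + C ^ 2 * α₂ ^ 2 * x₂ ^ 2 * hι₂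
      + C ^ 2 * x₁ ^ 2 * hE₁ + C ^ 2 * x₂ ^ 2 * hE₂ - 2 * C ^ 2 * x₁ * x₂ * ι₁ * ι₂ * h
      - 2 * C ^ 2 * E₁ * E₂ * x₁ * x₂ * (ι₂ ^ 2 * hι₁ - hι₂)
      - 4 * E₁ * E₂ * x₁ * x₂ * hC

theorem stmt_12_general (c : ℂ × ℂ) (k : ℕ)
    (a₁₁ a₁₂ a₂₁ a₂₂ : ℂ) (L₁ L₂ : ℂ × ℂ → ℂ)
    (hL₁ : ∀ z : ℂ × ℂ, L₁ z = a₁₁ * z.1 + a₁₂ * z.2)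
    (hL₂ : ∀ z : ℂ × ℂ, L₂ z = a₂₁ * z.1 + a₂₂ * z.2)
    (H₁ H₂ : ℂ → ℂ)
    (hH₁per : ∀ t : ℂ, H₁ (t + c.2) = H₁ t)
    (hH₂per : ∀ t : ℂ, H₂ (t + c.2) = H₂ t)
    (B₁ B₂ B₃ B₄ : ℂ)
    (hcases :
      (Complex.exp (L₁ c) = a₁₁ ^ k ∧ Complex.exp (L₂ c) = a₂₁ ^ k ∧
        Complex.exp (B₁ - B₂) = I ∧ Complex.exp (B₃ - B₄) = -I) ∨
      (Complex.exp (L₁ c) = a₁₁ ^ k ∧ Complex.exp (L₂ c) = -(a₂₁ ^ k) ∧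
        Complex.exp (B₁ - B₂) = I ∧ Complex.exp (B₃ - B₄) = I) ∨
      (Complex.exp (L₁ c) = -(a₁₁ ^ k) ∧ Complex.exp (L₂ c) = a₂₁ ^ k ∧
        Complex.exp (B₁ - B₂) = -I ∧ Complex.exp (B₃ - B₄) = -I) ∨
      (Complex.exp (L₁ c) = -(a₁₁ ^ k) ∧ Complex.exp (L₂ c) = -(a₂₁ ^ k) ∧
        Complex.exp (B₁ - B₂) = -I ∧ Complex.exp (B₃ - B₄) = I))
    (f₁ f₂ : ℂ × ℂ → ℂ)
    (hf₁ : ∀ z : ℂ × ℂ, f₁ z = -((1 / (2 * I)) *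
      (Complex.exp (L₁ z + H₁ z.2 - L₁ c + B₂) - Complex.exp (L₂ z + H₂ z.2 - L₂ c + B₄))))
    (hf₂ : ∀ z : ℂ × ℂ, f₂ z = (1 / (2 * I)) *
      (Complex.exp (L₁ z + H₁ z.2 - L₁ c + B₁) - Complex.exp (L₂ z + H₂ z.2 - L₂ c + B₃))) :
    ∀ z : ℂ × ℂ,
      (iteratedDeriv k (fun t => f₁ (t, z.2)) z.1) ^ 2 + f₂ (z + c) ^ 2 =
        Complex.exp (L₁ z + L₂ z + H₁ z.2 + H₂ z.2 + B₁ + B₃) ∧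
      (iteratedDeriv k (fun t => f₂ (t, z.2)) z.1) ^ 2 + f₁ (z + c) ^ 2 =
        Complex.exp (L₁ z + L₂ z + H₁ z.2 + H₂ z.2 + B₂ + B₄) := by
  intro z
  obtain ⟨hE₁, hE₂, hι₁, hι₂, hsign⟩ := sign_relations_of_cases hcases
  have hB (w B B' : ℂ) : exp (w + B) = exp (B - B') * exp (w + B') := by
    rw [← exp_add]; ring_nf
  have hprod (B B' : ℂ) : exp (L₁ z + L₂ z + H₁ z.2 + H₂ z.2 + B + B') =
      exp (L₁ c) * exp (L₁ z + H₁ z.2 - L₁ c + B) * (exp (L₂ c) * exp (L₂ z + H₂ z.2 - L₂ c + B')) := by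
    simp only [← exp_add]; ring_nf
  simp only [hf₁, hf₂, iteratedDeriv_fun_neg, iteratedDeriv_const_mul_cexp_slice_sub hL₁ hL₂,
    Prod.mk.eta, cexp_shift_of_periodic hL₁ hH₁per, cexp_shift_of_periodic hL₂ hH₂per, hprod]
  simp only [hB _ B₁ B₂, hB _ B₃ B₄]
  exact sq_add_sq_of_sign_relations hE₁ hE₂ hι₁ hι₂ hsign _ _

/-- Verification direction of Theorem 2, conclusion (iii). -/
theorem stmt_12 (c : ℂ × ℂ) (k : ℕ) (hk : 0 < k)
    (a₁₁ a₁₂ a₂₁ a₂₂ : ℂ) (L₁ L₂ : ℂ × ℂ → ℂ)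
    (hL₁ : ∀ z : ℂ × ℂ, L₁ z = a₁₁ * z.1 + a₁₂ * z.2)
    (hL₂ : ∀ z : ℂ × ℂ, L₂ z = a₂₁ * z.1 + a₂₂ * z.2)
    (H₁ H₂ : ℂ → ℂ)
    (hH₁poly : ∃ h : Polynomial ℂ, ∀ t, H₁ t = Polynomial.eval t h)
    (hH₂poly : ∃ h : Polynomial ℂ, ∀ t, H₂ t = Polynomial.eval t h)
    (hH₁per : ∀ t : ℂ, H₁ (t + c.2) = H₁ t)
    (hH₂per : ∀ t : ℂ, H₂ (t + c.2) = H₂ t)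
    (B₁ B₂ B₃ B₄ : ℂ)
    (hcases :
      (Complex.exp (L₁ c) = a₁₁ ^ k ∧ Complex.exp (L₂ c) = a₂₁ ^ k ∧
        Complex.exp (B₁ - B₂) = I ∧ Complex.exp (B₃ - B₄) = -I) ∨
      (Complex.exp (L₁ c) = a₁₁ ^ k ∧ Complex.exp (L₂ c) = -(a₂₁ ^ k) ∧
        Complex.exp (B₁ - B₂) = I ∧ Complex.exp (B₃ - B₄) = I) ∨
      (Complex.exp (L₁ c) = -(a₁₁ ^ k) ∧ Complex.exp (L₂ c) = a₂₁ ^ k ∧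
        Complex.exp (B₁ - B₂) = -I ∧ Complex.exp (B₃ - B₄) = -I) ∨
      (Complex.exp (L₁ c) = -(a₁₁ ^ k) ∧ Complex.exp (L₂ c) = -(a₂₁ ^ k) ∧
        Complex.exp (B₁ - B₂) = -I ∧ Complex.exp (B₃ - B₄) = I))
    (f₁ f₂ : ℂ × ℂ → ℂ)
    (hf₁ : ∀ z : ℂ × ℂ, f₁ z = -((1 / (2 * I)) *
      (Complex.exp (L₁ z + H₁ z.2 - L₁ c + B₂) - Complex.exp (L₂ z + H₂ z.2 - L₂ c + B₄))))
    (hf₂ : ∀ z : ℂ × ℂ, f₂ z = (1 / (2 * I)) *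
      (Complex.exp (L₁ z + H₁ z.2 - L₁ c + B₁) - Complex.exp (L₂ z + H₂ z.2 - L₂ c + B₃))) :
    ∀ z : ℂ × ℂ,
      (iteratedDeriv k (fun t => f₁ (t, z.2)) z.1) ^ 2 + f₂ (z + c) ^ 2 =
        Complex.exp (L₁ z + L₂ z + H₁ z.2 + H₂ z.2 + B₁ + B₃) ∧
      (iteratedDeriv k (fun t => f₂ (t, z.2)) z.1) ^ 2 + f₁ (z + c) ^ 2 =
        Complex.exp (L₁ z + L₂ z + H₁ z.2 + H₂ z.2 + B₂ + B₄) :=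
  stmt_12_general c k a₁₁ a₁₂ a₂₁ a₂₂ L₁ L₂ hL₁ hL₂ H₁ H₂ hH₁per hH₂per B₁ B₂ B₃ B₄ hcases f₁ f₂ hf₁
    hf₂
end

section
/- (Verification direction of Theorem 3, conclusion (i).) Let c = (c₁, c₂) ∈ ℂ², let k be an odd positive integer, let α₁, α₂, β, η ∈ ℂ with α₁ ≠ 0, let H : ℂ → ℂ be a one-variable polynomial function with H(z₂ + c₂) = H(z₂) for all z₂, set L(z) = α₁z₁ + α₂z₂ and P(z) = L(z) + H(z₂) + β, and assume exp(2η) = 1, α₁ᵏ = −2i·exp(−η), and exp(L(c)) = i·exp(η)/(α₁ᵏ + i·exp(η)). Define f₁(z) = (e^{P(z)} − e^{−P(z)})/(2α₁ᵏ) and f₂(z) = (e^{P(z)+η} − e^{−(P(z)+η)})/(2α₁ᵏ). Then for all z ∈ ℂ²: (∂ᵏf₁/∂z₁ᵏ)(z)² + (f₂(z + c) − f₂(z))² = 1 and (∂ᵏf₂/∂z₁ᵏ)(z)² + (f₁(z + c) − f₁(z))² = 1. -/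
/-!
Since `exp (2η) = 1` forces `exp (-η) = exp η =: s` with `s² = 1`, we have `f₁ = sinh P / α₁ᵏ`
and `f₂ = s · sinh P / α₁ᵏ`; for odd `k` the `k`-th `z₁`-derivative of `sinh P` is
`α₁ᵏ cosh P`. The hypotheses make `α₁ᵏ = -2is` and `exp (L c) = -1`, and the periodicity of `H`
gives `P (z + c) = P z + L c`, so `sinh P` changes sign under the shift by `c`. Both identities
thereby reduce to `cosh² - sinh² = 1`.
-/

open Complex

namespace Complex

theorem iteratedDeriv_sinh_of_odd {n : ℕ} (hn : Odd n) : iteratedDeriv n sinh = cosh := by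
  obtain ⟨m, rfl⟩ := hn
  have h2 : deriv^[2] sinh = sinh := by simp [deriv_sinh, deriv_cosh]
  rw [iteratedDeriv_eq_iterate, add_comm, Function.iterate_add_apply, Function.iterate_one,
    Function.iterate_mul, Function.iterate_fixed h2, deriv_sinh]

theorem iteratedDeriv_sinh_mul_add_of_odd {n : ℕ} (hn : Odd n) (a b x : ℂ) :
    iteratedDeriv n (fun t => sinh (a * t + b)) x = a ^ n * cosh (a * x + b) := by
  have hg : ContDiff ℂ n (fun u => sinh (u + b)) := by fun_prop
  rw [iteratedDeriv_comp_const_mul hg, iteratedDeriv_comp_add_const,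
    iteratedDeriv_sinh_of_odd hn]

theorem iteratedDeriv_mul_sinh_mul_add_div_pow_of_odd {n : ℕ} (hn : Odd n) {a : ℂ}
    (ha : a ^ n ≠ 0) (C b x : ℂ) :
    iteratedDeriv n (fun t => C * sinh (a * t + b) / a ^ n) x = C * cosh (a * x + b) := by
  simp only [mul_div_assoc]
  rw [iteratedDeriv_const_mul_field, iteratedDeriv_div_const,
    iteratedDeriv_sinh_mul_add_of_odd hn, mul_div_cancel_left₀ _ ha]

theorem exp_neg_of_exp_two_mul_eq_one {η : ℂ} (h : exp (2 * η) = 1) : exp (-η) = exp η := by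
  rw [← mul_one (exp (-η)), ← h, ← exp_add]
  ring_nf

theorem sinh_add_of_exp_two_mul_eq_one {η : ℂ} (h : exp (2 * η) = 1) (z : ℂ) :
    sinh (z + η) = exp η * sinh z := by
  rw [sinh, sinh, exp_add, neg_add, exp_add, exp_neg_of_exp_two_mul_eq_one h]
  ring

theorem sinh_add_of_exp_eq_neg_one {w : ℂ} (h : exp w = -1) (z : ℂ) :
    sinh (z + w) = -sinh z := by
  rw [sinh, sinh, exp_add, neg_add, exp_add, exp_neg w, h]
  ring

end Complex

theorem stmt_13_general (c : ℂ × ℂ) (k : ℕ) (hkodd : Odd k)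
    (α₁ α₂ β η : ℂ)
    (H : ℂ → ℂ)
    (hHper : ∀ t : ℂ, H (t + c.2) = H t)
    (L P : ℂ × ℂ → ℂ)
    (hL : ∀ z : ℂ × ℂ, L z = α₁ * z.1 + α₂ * z.2)
    (hP : ∀ z : ℂ × ℂ, P z = L z + H z.2 + β)
    (hη : Complex.exp (2 * η) = 1)
    (hα₁k : α₁ ^ k = -2 * I * Complex.exp (-η))
    (hLc : Complex.exp (L c) = I * Complex.exp η / (α₁ ^ k + I * Complex.exp η))
    (f₁ f₂ : ℂ × ℂ → ℂ)
    (hf₁ : ∀ z : ℂ × ℂ, f₁ z =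
      (Complex.exp (P z) - Complex.exp (-P z)) / (2 * α₁ ^ k))
    (hf₂ : ∀ z : ℂ × ℂ, f₂ z =
      (Complex.exp (P z + η) - Complex.exp (-(P z + η))) / (2 * α₁ ^ k)) :
    ∀ z : ℂ × ℂ,
      (iteratedDeriv k (fun t => f₁ (t, z.2)) z.1) ^ 2 + (f₂ (z + c) - f₂ z) ^ 2 = 1 ∧
      (iteratedDeriv k (fun t => f₂ (t, z.2)) z.1) ^ 2 + (f₁ (z + c) - f₁ z) ^ 2 = 1 := by
  intro z
  have hs : exp η ^ 2 = 1 := by rw [sq, ← exp_add, ← two_mul, hη]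
  have ha : α₁ ^ k = -2 * I * exp η := by rw [hα₁k, exp_neg_of_exp_two_mul_eq_one hη]
  have ha0 : α₁ ^ k ≠ 0 := by simp [ha, exp_ne_zero]
  have hLc' : exp (L c) = -1 := by
    rw [hLc, ha, show -2 * I * exp η + I * exp η = -(I * exp η) by ring, div_neg,
      div_self (mul_ne_zero I_ne_zero (exp_ne_zero η))]
  have hPc : P (z + c) = P z + L c := by
    simp only [hP, hL, Prod.fst_add, Prod.snd_add, hHper]
    ring
  have hPt : ∀ t, P (t, z.2) = α₁ * t + (α₂ * z.2 + H z.2 + β) := fun t => by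
    rw [hP, hL]; ring
  have hf₁' : ∀ w, f₁ w = 1 * sinh (P w) / α₁ ^ k := fun w => by rw [hf₁, sinh]; ring
  have hf₂' : ∀ w, f₂ w = exp η * sinh (P w) / α₁ ^ k := fun w => by
    rw [hf₂, ← sinh_add_of_exp_two_mul_eq_one hη, sinh]; ring
  have hd₁ : iteratedDeriv k (fun t => f₁ (t, z.2)) z.1 = cosh (P z) := by
    simp only [hf₁', hPt]
    rw [iteratedDeriv_mul_sinh_mul_add_div_pow_of_odd hkodd ha0, ← hPt, one_mul]
  have hd₂ : iteratedDeriv k (fun t => f₂ (t, z.2)) z.1 = exp η * cosh (P z) := by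
    simp only [hf₂', hPt]
    rw [iteratedDeriv_mul_sinh_mul_add_div_pow_of_odd hkodd ha0, ← hPt]
  have hΔ₁ : f₁ (z + c) - f₁ z = -I * exp η * sinh (P z) := by
    rw [hf₁', hf₁', hPc, sinh_add_of_exp_eq_neg_one hLc', ha]
    field_simp
    linear_combination 2 * sinh (P z) * exp η ^ 2 * I_sq - 2 * sinh (P z) * hs
  have hΔ₂ : f₂ (z + c) - f₂ z = -I * sinh (P z) := by
    rw [hf₂', hf₂', hPc, sinh_add_of_exp_eq_neg_one hLc', ha]
    field_simp
    linear_combination 2 * sinh (P z) * I_sq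
  rw [hd₁, hd₂, hΔ₁, hΔ₂]
  constructor
  · linear_combination cosh_sq_sub_sinh_sq (P z) + sinh (P z) ^ 2 * I_sq
  · linear_combination exp η ^ 2 * cosh_sq_sub_sinh_sq (P z) +
      exp η ^ 2 * sinh (P z) ^ 2 * I_sq + hs

/-- Verification direction of Theorem 3, conclusion (i) (k odd). -/
theorem stmt_13 (c : ℂ × ℂ) (k : ℕ) (hk : 0 < k) (hkodd : Odd k)
    (α₁ α₂ β η : ℂ) (hα₁ : α₁ ≠ 0)
    (H : ℂ → ℂ) (hHpoly : ∃ h : Polynomial ℂ, ∀ t, H t = Polynomial.eval t h)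
    (hHper : ∀ t : ℂ, H (t + c.2) = H t)
    (L P : ℂ × ℂ → ℂ)
    (hL : ∀ z : ℂ × ℂ, L z = α₁ * z.1 + α₂ * z.2)
    (hP : ∀ z : ℂ × ℂ, P z = L z + H z.2 + β)
    (hη : Complex.exp (2 * η) = 1)
    (hα₁k : α₁ ^ k = -2 * I * Complex.exp (-η))
    (hLc : Complex.exp (L c) = I * Complex.exp η / (α₁ ^ k + I * Complex.exp η))
    (f₁ f₂ : ℂ × ℂ → ℂ)
    (hf₁ : ∀ z : ℂ × ℂ, f₁ z =
      (Complex.exp (P z) - Complex.exp (-P z)) / (2 * α₁ ^ k))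
    (hf₂ : ∀ z : ℂ × ℂ, f₂ z =
      (Complex.exp (P z + η) - Complex.exp (-(P z + η))) / (2 * α₁ ^ k)) :
    ∀ z : ℂ × ℂ,
      (iteratedDeriv k (fun t => f₁ (t, z.2)) z.1) ^ 2 + (f₂ (z + c) - f₂ z) ^ 2 = 1 ∧
      (iteratedDeriv k (fun t => f₂ (t, z.2)) z.1) ^ 2 + (f₁ (z + c) - f₁ z) ^ 2 = 1 :=
  stmt_13_general c k hkodd α₁ α₂ β η H hHper L P hL hP hη hα₁k hLc f₁ f₂ hf₁ hf₂
end

section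
/- (Verification direction of Theorem 3, conclusion (ii).) Let c = (c₁, c₂) ∈ ℂ², let k be an even positive integer, let α₁, α₂, β, η ∈ ℂ with α₁ ≠ 0, let H : ℂ → ℂ be a one-variable polynomial function with H(z₂ + c₂) = H(z₂) for all z₂, set L(z) = α₁z₁ + α₂z₂ and P(z) = L(z) + H(z₂) + β, and assume exp(2η) = −1, α₁ᵏ = 2i·exp(η), and exp(L(c)) = 1 + i·exp(−η)·α₁ᵏ. Define f₁(z) = (e^{P(z)} + e^{−P(z)})/(2α₁ᵏ) and f₂(z) = (e^{−P(z)+η} + e^{P(z)−η})/(2α₁ᵏ). Then for all z ∈ ℂ²: (∂ᵏf₁/∂z₁ᵏ)(z)² + (f₂(z + c) − f₂(z))² = 1 and (∂ᵏf₂/∂z₁ᵏ)(z)² + (f₁(z + c) − f₁(z))² = 1. -/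
/-!
Writing `A = α₁ ^ k`, we have `f₁ = cosh P / A` and `f₂ = cosh (P - η) / A`. Since `P` is affine in
`z₁` with slope `α₁` and `k` is even, `∂ᵏ/∂z₁ᵏ` multiplies `cosh (P - s)` by `A`, so `∂ᵏfᵢ = A fᵢ`.
The hypotheses force `exp (L c) = -1` and `A ^ 2 = 4`; as `P (z + c) = P z + L c`, shifting by `c`
changes the sign of `fᵢ`, so `fᵢ (z + c) - fᵢ z = -2 fᵢ z`. Both equations thus reduce to
`cosh² w + cosh² (w - η) = 1`, which holds because `exp (2η) = -1` makes `cosh η = 0`.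
-/

open Complex

namespace Complex

theorem iteratedDeriv_cosh_mul_add {n : ℕ} (hn : Even n) (a b x : ℂ) :
    iteratedDeriv n (fun t => cosh (a * t + b)) x = a ^ n * cosh (a * x + b) := by
  obtain ⟨m, rfl⟩ := hn.two_dvd
  have hsmooth : ContDiff ℂ (2 * m : ℕ) fun s => cosh (s + b) := by fun_prop
  rw [iteratedDeriv_comp_const_mul hsmooth a, iteratedDeriv_comp_add_const _ cosh,
    iteratedDeriv_even_cosh]

theorem cosh_eq_zero_of_exp_two_mul_eq_neg_one {η : ℂ} (hη : exp (2 * η) = -1) :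
    cosh η = 0 := by
  have h : exp η * (2 * cosh η) = exp (2 * η) + 1 := by
    rw [two_cosh, mul_add, ← exp_add, ← exp_add, two_mul, add_neg_cancel, exp_zero]
  rw [hη, neg_add_cancel] at h
  simpa using h

theorem cosh_antiperiodic_of_exp_eq_neg_one {ℓ : ℂ} (hℓ : exp ℓ = -1) :
    Function.Antiperiodic cosh ℓ := by
  intro w
  have h : 2 * cosh (w + ℓ) = -(2 * cosh w) := by
    rw [two_cosh, two_cosh, neg_add, exp_add, exp_add, exp_neg ℓ, hℓ]
    ring
  linear_combination h / 2

theorem cosh_sq_add_cosh_sub_sq {η : ℂ} (hη : cosh η = 0) (w : ℂ) :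
    cosh w ^ 2 + cosh (w - η) ^ 2 = 1 := by
  have hsinh : sinh η ^ 2 = -1 := by rw [sinh_sq, hη]; norm_num
  rw [cosh_sub, hη]
  linear_combination sinh w ^ 2 * hsinh + cosh_sq_sub_sinh_sq w

end Complex

theorem stmt_14_general (c : ℂ × ℂ) (k : ℕ) (hkeven : Even k)
    (α₁ α₂ β η : ℂ) (hα₁ : α₁ ≠ 0)
    (H : ℂ → ℂ)
    (hHper : ∀ t : ℂ, H (t + c.2) = H t)
    (L P : ℂ × ℂ → ℂ)
    (hL : ∀ z : ℂ × ℂ, L z = α₁ * z.1 + α₂ * z.2)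
    (hP : ∀ z : ℂ × ℂ, P z = L z + H z.2 + β)
    (hη : Complex.exp (2 * η) = -1)
    (hα₁k : α₁ ^ k = 2 * I * Complex.exp η)
    (hLc : Complex.exp (L c) = 1 + I * Complex.exp (-η) * α₁ ^ k)
    (f₁ f₂ : ℂ × ℂ → ℂ)
    (hf₁ : ∀ z : ℂ × ℂ, f₁ z =
      (Complex.exp (P z) + Complex.exp (-P z)) / (2 * α₁ ^ k))
    (hf₂ : ∀ z : ℂ × ℂ, f₂ z =
      (Complex.exp (-P z + η) + Complex.exp (P z - η)) / (2 * α₁ ^ k)) :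
    ∀ z : ℂ × ℂ,
      (iteratedDeriv k (fun t => f₁ (t, z.2)) z.1) ^ 2 + (f₂ (z + c) - f₂ z) ^ 2 = 1 ∧
      (iteratedDeriv k (fun t => f₂ (t, z.2)) z.1) ^ 2 + (f₁ (z + c) - f₁ z) ^ 2 = 1 := by
  intro z
  have hA : α₁ ^ k ≠ 0 := pow_ne_zero k hα₁
  have hA_sq : (α₁ ^ k) ^ 2 = 4 := by
    rw [hα₁k, mul_pow, ← exp_nat_mul]
    push_cast
    rw [hη]
    linear_combination -4 * I_sq
  have hf₁_cosh : ∀ w, f₁ w = cosh (P w) / α₁ ^ k := by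
    intro w
    rw [hf₁, ← two_cosh]
    field_simp
  have hf₂_cosh : ∀ w, f₂ w = cosh (P w - η) / α₁ ^ k := by
    intro w
    rw [hf₂, add_comm, show -P w + η = -(P w - η) by ring, ← two_cosh]
    field_simp
  have hexp_Lc : exp (L c) = -1 := by
    rw [hLc, hα₁k, exp_neg]
    field_simp
    linear_combination 2 * I_sq
  have hslice : ∀ s, iteratedDeriv k (fun t => cosh (P (t, z.2) - s) / α₁ ^ k) z.1
      = cosh (P z - s) := by
    intro s
    have hPt : ∀ t, P (t, z.2) - s = α₁ * t + (α₂ * z.2 + H z.2 + β - s) := by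
      intro t; rw [hP, hL]; ring
    simp only [hPt, iteratedDeriv_div_const, iteratedDeriv_cosh_mul_add hkeven]
    rw [mul_div_cancel_left₀ _ hA, ← hPt]
  have hd₁ : iteratedDeriv k (fun t => cosh (P (t, z.2)) / α₁ ^ k) z.1 = cosh (P z) := by
    simpa using hslice 0
  have hPc : P (z + c) = P z + L c := by
    simp only [hP, hL, Prod.fst_add, Prod.snd_add, hHper]
    ring
  have hperiod := cosh_antiperiodic_of_exp_eq_neg_one hexp_Lc
  have hsum := cosh_sq_add_cosh_sub_sq (cosh_eq_zero_of_exp_two_mul_eq_neg_one hη) (P z)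
  simp only [hf₁_cosh, hf₂_cosh, hd₁, hslice, hPc, add_sub_right_comm _ (L c), hperiod (P z),
    hperiod (P z - η)]
  constructor <;> field_simp <;> rw [hA_sq] <;> linear_combination 4 * hsum

/-- Verification direction of Theorem 3, conclusion (ii) (k even). -/
theorem stmt_14 (c : ℂ × ℂ) (k : ℕ) (hk : 0 < k) (hkeven : Even k)
    (α₁ α₂ β η : ℂ) (hα₁ : α₁ ≠ 0)
    (H : ℂ → ℂ) (hHpoly : ∃ h : Polynomial ℂ, ∀ t, H t = Polynomial.eval t h)
    (hHper : ∀ t : ℂ, H (t + c.2) = H t)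
    (L P : ℂ × ℂ → ℂ)
    (hL : ∀ z : ℂ × ℂ, L z = α₁ * z.1 + α₂ * z.2)
    (hP : ∀ z : ℂ × ℂ, P z = L z + H z.2 + β)
    (hη : Complex.exp (2 * η) = -1)
    (hα₁k : α₁ ^ k = 2 * I * Complex.exp η)
    (hLc : Complex.exp (L c) = 1 + I * Complex.exp (-η) * α₁ ^ k)
    (f₁ f₂ : ℂ × ℂ → ℂ)
    (hf₁ : ∀ z : ℂ × ℂ, f₁ z =
      (Complex.exp (P z) + Complex.exp (-P z)) / (2 * α₁ ^ k))
    (hf₂ : ∀ z : ℂ × ℂ, f₂ z =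
      (Complex.exp (-P z + η) + Complex.exp (P z - η)) / (2 * α₁ ^ k)) :
    ∀ z : ℂ × ℂ,
      (iteratedDeriv k (fun t => f₁ (t, z.2)) z.1) ^ 2 + (f₂ (z + c) - f₂ z) ^ 2 = 1 ∧
      (iteratedDeriv k (fun t => f₂ (t, z.2)) z.1) ^ 2 + (f₁ (z + c) - f₁ z) ^ 2 = 1 :=
  stmt_14_general c k hkeven α₁ α₂ β η hα₁ H hHper L P hL hP hη hα₁k hLc f₁ f₂ hf₁ hf₂
end

section
/- (Example 1, instantiating Theorem 1(i).) Let c = (c₁, c₂) ∈ ℂ² satisfy exp(c₁ + 2c₂) = −9/25, and let B₁, B₂ ∈ ℂ with B₁ − B₂ = 2πi. Define Φ(z₁, z₂) = (c₂z₁ − c₁z₂)³, f₁(z₁, z₂) = (5/4)·exp((z₁ + 2z₂ + Φ(z₁, z₂) + B₁)/2) and f₂(z₁, z₂) = (5/4)·exp((z₁ + 2z₂ + Φ(z₁, z₂) + B₂)/2). Then for all z = (z₁, z₂) ∈ ℂ²: f₁(z)² + f₂(z + c)² = exp(z₁ + 2z₂ + Φ(z) + B₁) and f₂(z)² + f₁(z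 + c)² = exp(z₁ + 2z₂ + Φ(z) + B₂). -/
open Complex

/-
If `g (z + c) = g z + s`, then `f = a e^{(g + B)/2}` gives `f(z + c)² = e^s f(z)²`, so each equation
of the system reduces to `a² (1 + e^s) = 1` once `e^{B₁} = e^{B₂}`. For the example, `g z = z₁ + 2 z₂ + Φ z`
with `Φ` invariant under `z ↦ z + c`, so `e^s = e^{c₁ + 2 c₂} = -9/25` and `a² = 25/16 = 1 / (1 - 9/25)`.
-/

theorem sq_mul_exp_half (a w : ℂ) : (a * exp (w / 2)) ^ 2 = a ^ 2 * exp w := by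
  rw [mul_pow, ← exp_nat_mul]
  ring_nf

theorem exp_half_sq_add_shift_sq {G : Type*} [Add G] (g : G → ℂ) (c : G) (s a B₁ B₂ : ℂ)
    (hg : ∀ z, g (z + c) = g z + s) (ha : a ^ 2 * (1 + exp s) = 1) (hB : exp B₁ = exp B₂) (z : G) :
    (a * exp ((g z + B₁) / 2)) ^ 2 + (a * exp ((g (z + c) + B₂) / 2)) ^ 2 = exp (g z + B₁) := by
  rw [sq_mul_exp_half, sq_mul_exp_half, hg, add_right_comm, exp_add (g z + B₂), exp_add, exp_add, hB]
  linear_combination exp (g z) * exp B₂ * ha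

/-- Example 1, instantiating Theorem 1(i). -/
theorem stmt_15 (c : ℂ × ℂ) (hc : Complex.exp (c.1 + 2 * c.2) = -9 / 25)
    (B₁ B₂ : ℂ) (hB : B₁ - B₂ = 2 * (Real.pi : ℂ) * I)
    (Φ f₁ f₂ : ℂ × ℂ → ℂ)
    (hΦ : ∀ z : ℂ × ℂ, Φ z = (c.2 * z.1 - c.1 * z.2) ^ 3)
    (hf₁ : ∀ z : ℂ × ℂ, f₁ z = (5 / 4) * Complex.exp ((z.1 + 2 * z.2 + Φ z + B₁) / 2))
    (hf₂ : ∀ z : ℂ × ℂ, f₂ z = (5 / 4) * Complex.exp ((z.1 + 2 * z.2 + Φ z + B₂) / 2)) :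
    ∀ z : ℂ × ℂ,
      f₁ z ^ 2 + f₂ (z + c) ^ 2 = Complex.exp (z.1 + 2 * z.2 + Φ z + B₁) ∧
      f₂ z ^ 2 + f₁ (z + c) ^ 2 = Complex.exp (z.1 + 2 * z.2 + Φ z + B₂) := by
  set g : ℂ × ℂ → ℂ := fun z ↦ z.1 + 2 * z.2 + Φ z
  have hg : ∀ z, g (z + c) = g z + (c.1 + 2 * c.2) := fun z ↦ by
    simp only [g, hΦ, Prod.fst_add, Prod.snd_add]
    ring
  have ha : (5 / 4 : ℂ) ^ 2 * (1 + exp (c.1 + 2 * c.2)) = 1 := by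
    rw [hc]
    norm_num
  have hexpB : exp B₁ = exp B₂ :=
    exp_eq_exp_iff_exists_int.mpr ⟨1, by linear_combination hB⟩
  intro z
  simp only [hf₁, hf₂]
  exact ⟨exp_half_sq_add_shift_sq g c _ _ B₁ B₂ hg ha hexpB z,
    exp_half_sq_add_shift_sq g c _ _ B₂ B₁ hg ha hexpB.symm z⟩
end

section
/- (Example 4, instantiating Theorem 2(ii) with k = 2.) Let c = (c₁, c₂) = (2·log 2, πi/2 − 2·log 2) ∈ ℂ² (log 2 the real logarithm of 2). Define f₁(z₁, z₂) = (1/8)(4e^{z₁+z₂} − e^{2z₁+z₂}) and f₂(z₁, z₂) = −(1/8)(4e^{z₁+z₂} + e^{2z₁+z₂}). Then for all z = (z₁, z₂) ∈ ℂ²: (∂²f₁/∂z₁²)(z)² + f₂(z + c)² = −exp(3z₁ + 2z₂) (i.e., e^{3z₁+2z₂+3πi}) and (∂²f₂/∂z₁²)(z)² + f₁(z + c)² = exp(3z₁ + 2z₂) (i.e., e^{3z₁+2z₂+2πi}). -/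
/-!
Write `A = e^{z₁+z₂}` and `B = e^{2z₁+z₂}`, so that `AB = e^{3z₁+2z₂}`. Both `f₁` and `f₂` are
linear combinations of `A` and `B`; `∂²/∂z₁²` multiplies `A` by `1` and `B` by `4`, while the shift
by `c` multiplies `A` by `e^{πi/2} = i` and `B` by `e^{2 log 2 + πi/2} = 4i`. Both identities then
reduce to `((A - B)/2)² - ((A + B)/2)² = -AB`.
-/

open Complex

theorem iteratedDeriv_cexp_const_mul_add (n : ℕ) (k w : ℂ) :
    iteratedDeriv n (fun t => exp (k * t + w)) = fun t => k ^ n * exp (k * t + w) := by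
  funext t
  simp only [exp_add, iteratedDeriv_mul_const_field, iteratedDeriv_cexp_const_mul, mul_assoc]

theorem iteratedDeriv_const_mul_cexp_add_const_mul_cexp (n : ℕ) (a b p q w t : ℂ) :
    iteratedDeriv n (fun t => a * exp (p * t + w) + b * exp (q * t + w)) t =
      a * p ^ n * exp (p * t + w) + b * q ^ n * exp (q * t + w) := by
  rw [iteratedDeriv_fun_add (by fun_prop) (by fun_prop), iteratedDeriv_const_mul_field,
    iteratedDeriv_const_mul_field, iteratedDeriv_cexp_const_mul_add,
    iteratedDeriv_cexp_const_mul_add, mul_assoc, mul_assoc]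

theorem exp_pi_mul_I_div_two : exp (Real.pi * I / 2) = I := by
  rw [mul_div_right_comm, exp_pi_div_two_mul_I]

theorem exp_two_mul_log_two : exp (2 * (Real.log 2 : ℂ)) = 4 := by
  rw [two_mul, exp_add, ← ofReal_exp, Real.exp_log two_pos]
  norm_num

/-- Example 4, instantiating Theorem 2(ii) with k = 2. -/
theorem stmt_17 (c : ℂ × ℂ)
    (hc : c = (2 * (Real.log 2 : ℂ), (Real.pi : ℂ) * I / 2 - 2 * (Real.log 2 : ℂ)))
    (f₁ f₂ : ℂ × ℂ → ℂ)
    (hf₁ : ∀ z : ℂ × ℂ, f₁ z = (1 / 8) *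
      (4 * Complex.exp (z.1 + z.2) - Complex.exp (2 * z.1 + z.2)))
    (hf₂ : ∀ z : ℂ × ℂ, f₂ z = -((1 / 8) *
      (4 * Complex.exp (z.1 + z.2) + Complex.exp (2 * z.1 + z.2)))) :
    ∀ z : ℂ × ℂ,
      (iteratedDeriv 2 (fun t => f₁ (t, z.2)) z.1) ^ 2 + f₂ (z + c) ^ 2 =
        -Complex.exp (3 * z.1 + 2 * z.2) ∧
      (iteratedDeriv 2 (fun t => f₂ (t, z.2)) z.1) ^ 2 + f₁ (z + c) ^ 2 =
        Complex.exp (3 * z.1 + 2 * z.2) := by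
  intro z
  have hf₁_slice : (fun t => f₁ (t, z.2)) =
      fun t => 1 / 2 * exp (1 * t + z.2) + -1 / 8 * exp (2 * t + z.2) := by
    funext t; rw [hf₁, one_mul]; ring
  have hf₂_slice : (fun t => f₂ (t, z.2)) =
      fun t => -1 / 2 * exp (1 * t + z.2) + -1 / 8 * exp (2 * t + z.2) := by
    funext t; rw [hf₂, one_mul]; ring
  have hA_shift : exp ((z + c).1 + (z + c).2) = I * exp (z.1 + z.2) := by
    rw [← exp_pi_mul_I_div_two, ← exp_add, hc]; simp only [Prod.fst_add, Prod.snd_add]; ring_nf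
  have hB_shift : exp (2 * (z + c).1 + (z + c).2) = 4 * I * exp (2 * z.1 + z.2) := by
    rw [← exp_two_mul_log_two, ← exp_pi_mul_I_div_two, ← exp_add, ← exp_add, hc]
    simp only [Prod.fst_add, Prod.snd_add]; ring_nf
  have hAB : exp (3 * z.1 + 2 * z.2) = exp (z.1 + z.2) * exp (2 * z.1 + z.2) := by
    rw [← exp_add]; ring_nf
  rw [hf₁_slice, hf₂_slice, iteratedDeriv_const_mul_cexp_add_const_mul_cexp,
    iteratedDeriv_const_mul_cexp_add_const_mul_cexp, one_mul, hf₁, hf₂, hA_shift, hB_shift, hAB]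
  constructor
  · linear_combination (exp (z.1 + z.2) + exp (2 * z.1 + z.2)) ^ 2 / 4 * I_sq
  · linear_combination (exp (z.1 + z.2) - exp (2 * z.1 + z.2)) ^ 2 / 4 * I_sq
end

section
/- (Example 5, instantiating Theorem 2(iii) with k = 1.) Let c = ((1/2)·log 2, 0) ∈ ℂ² (log 2 the real logarithm of 2). Define A(z) = 2z₁ + 3z₂ + z₂³, B(z) = 2z₁ − z₂ + z₂⁵, f₁(z) = −(1/(4i))(i·e^{A(z)} + e^{B(z)}) and f₂(z) = −(1/(4i))(e^{A(z)} + i·e^{B(z)}). Then for all z = (z₁, z₂) ∈ ℂ²: (∂f₁/∂z₁)(z)² + f₂(z + c)² = −i·exp(4z₁ + 2z₂ + z₂³ + z₂⁵) and (∂f₂/∂z₁)(z)² + f₁(z + c)² = −i·exp(4z₁ + 2z₂ + z₂³ + z₂⁵); that is, both equal e^{g(z)} with g(z) = 4z₁ + 2z₂ + z₂³ + z₂⁵ + 3πi/2. -/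
open Complex

/-
Both `f₁` and `f₂` satisfy `f (z₁, z₂) = exp (2 z₁) · f (0, z₂)`. Hence differentiating in `z₁` and
translating by `c` (note `exp (2 · ½ log 2) = 2`) each multiply them by `2`, so both left-hand
sides equal `4 (f₁ z ^ 2 + f₂ z ^ 2)`. With `a = exp (A z)`, `b = exp (B z)` one has
`(I a + b) ^ 2 + (a + I b) ^ 2 = 4 I a b`, which gives `-I a b = -I exp (A z + B z)`.
-/

section ExpFactor

variable {f : ℂ × ℂ → ℂ} {k : ℂ}

theorem deriv_fst_eq_mul_of_eq_exp_mul (hf : ∀ z : ℂ × ℂ, f z = exp (k * z.1) * f (0, z.2))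
    (z : ℂ × ℂ) : deriv (fun t => f (t, z.2)) z.1 = k * f z := by
  have h : HasDerivAt (fun t => exp (k * t) * f (0, z.2)) (exp (k * z.1) * k * f (0, z.2)) z.1 :=
    (((hasDerivAt_id z.1).const_mul k).cexp.congr_deriv (by simp)).mul_const _
  rw [funext fun t => hf (t, z.2), h.deriv, hf z]
  ring

theorem apply_add_fst_of_eq_exp_mul (hf : ∀ z : ℂ × ℂ, f z = exp (k * z.1) * f (0, z.2))
    (z : ℂ × ℂ) (s : ℂ) : f (z + (s, 0)) = exp (k * s) * f z := by
  rw [hf, hf z, Prod.fst_add, Prod.snd_add, add_zero, mul_add, exp_add]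
  ring

end ExpFactor

theorem exp_two_mul_half_log_two : exp (2 * ((1 / 2) * (Real.log 2 : ℂ))) = 2 := by
  rw [← mul_assoc, mul_one_div_cancel two_ne_zero, one_mul, ← ofReal_exp,
    Real.exp_log two_pos, ofReal_ofNat]

theorem sq_add_sq_of_I_mul_add (a b : ℂ) :
    (-((1 / (4 * I)) * (I * a + b))) ^ 2 + (-((1 / (4 * I)) * (a + I * b))) ^ 2 =
      -I / 4 * (a * b) := by
  field_simp
  ring_nf
  simp only [I_sq, I_pow_three]
  ring

/-- Example 5, instantiating Theorem 2(iii) with k = 1. -/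
theorem stmt_18 (c : ℂ × ℂ) (hc : c = ((1 / 2) * (Real.log 2 : ℂ), 0))
    (A B f₁ f₂ : ℂ × ℂ → ℂ)
    (hA : ∀ z : ℂ × ℂ, A z = 2 * z.1 + 3 * z.2 + z.2 ^ 3)
    (hB : ∀ z : ℂ × ℂ, B z = 2 * z.1 - z.2 + z.2 ^ 5)
    (hf₁ : ∀ z : ℂ × ℂ, f₁ z = -((1 / (4 * I)) *
      (I * Complex.exp (A z) + Complex.exp (B z))))
    (hf₂ : ∀ z : ℂ × ℂ, f₂ z = -((1 / (4 * I)) *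
      (Complex.exp (A z) + I * Complex.exp (B z)))) :
    ∀ z : ℂ × ℂ,
      (deriv (fun t => f₁ (t, z.2)) z.1) ^ 2 + f₂ (z + c) ^ 2 =
        -I * Complex.exp (4 * z.1 + 2 * z.2 + z.2 ^ 3 + z.2 ^ 5) ∧
      (deriv (fun t => f₂ (t, z.2)) z.1) ^ 2 + f₁ (z + c) ^ 2 =
        -I * Complex.exp (4 * z.1 + 2 * z.2 + z.2 ^ 3 + z.2 ^ 5) := by
  have hexpA : ∀ z : ℂ × ℂ, exp (A z) = exp (2 * z.1) * exp (A (0, z.2)) := by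
    intro z; simp only [hA, ← exp_add]; ring_nf
  have hexpB : ∀ z : ℂ × ℂ, exp (B z) = exp (2 * z.1) * exp (B (0, z.2)) := by
    intro z; simp only [hB, ← exp_add]; ring_nf
  have h₁ : ∀ z : ℂ × ℂ, f₁ z = exp (2 * z.1) * f₁ (0, z.2) := by
    intro z; rw [hf₁, hf₁, hexpA, hexpB]; ring
  have h₂ : ∀ z : ℂ × ℂ, f₂ z = exp (2 * z.1) * f₂ (0, z.2) := by
    intro z; rw [hf₂, hf₂, hexpA, hexpB]; ring
  intro z
  have hsum : 4 * (f₁ z ^ 2 + f₂ z ^ 2) =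
      -I * Complex.exp (4 * z.1 + 2 * z.2 + z.2 ^ 3 + z.2 ^ 5) := by
    rw [hf₁, hf₂, sq_add_sq_of_I_mul_add, ← exp_add, hA, hB]
    ring_nf
  rw [deriv_fst_eq_mul_of_eq_exp_mul h₁ z, deriv_fst_eq_mul_of_eq_exp_mul h₂ z, hc,
    apply_add_fst_of_eq_exp_mul h₁, apply_add_fst_of_eq_exp_mul h₂, exp_two_mul_half_log_two]
  constructor <;> linear_combination hsum
end

section
/- (Example 6, instantiating Theorem 3(i) with k = 1.) Let c = (c₁, 0) ∈ ℂ² with exp(2i·c₁) = −1 (e.g., 2i·c₁ = (2m+1)πi for an integer m). Define P(z₁, z₂) = 2i·z₁ − z₂ − z₂¹⁰ and f₁(z) = f₂(z) = (e^{P(z)} − e^{−P(z)})/(4i). Then for all z = (z₁, z₂) ∈ ℂ²: (∂f₁/∂z₁)(z)² + (f₂(z + c) − f₂(z))² = 1 and (∂f₂/∂z₁)(z)² + (f₁(z + c) − f₁(z))² = 1. -/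
open Complex

/-! Writing `f = sinh P / (2i)`, the partial derivative is `cosh P`, while `exp (2i c₁) = -1`
turns the shift `z ↦ z + c` into `sinh P ↦ -sinh P`, so the difference is `i sinh P`.
The identity is then `cosh² P - sinh² P = 1`. -/

theorem Complex.sinh_add_of_exp_eq_neg_one_s19 {a : ℂ} (ha : exp a = -1) (w : ℂ) :
    sinh (w + a) = -sinh w := by
  have ha' : exp (-a) = -1 := by rw [exp_neg, ha]; norm_num
  have hcosh : cosh a = -1 := by rw [cosh, ha, ha']; norm_num
  have hsinh : sinh a = 0 := by rw [sinh, ha, ha']; norm_num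
  rw [sinh_add, hcosh, hsinh]
  ring

theorem Complex.hasDerivAt_sinh_mul_add_div {a : ℂ} (ha : a ≠ 0) (b x : ℂ) :
    HasDerivAt (fun t => sinh (a * t + b) / a) (cosh (a * x + b)) x := by
  have hlin : HasDerivAt (fun t => a * t + b) a x := by
    simpa using ((hasDerivAt_id x).const_mul a).add_const b
  simpa only [mul_div_cancel_right₀ _ ha] using hlin.csinh.div_const a

theorem deriv_sq_add_sub_sq_of_eq_sinh_div (g : ℂ → ℂ) {c₁ : ℂ}
    (hc₁ : exp (2 * I * c₁) = -1) (f : ℂ × ℂ → ℂ)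
    (hf : ∀ z : ℂ × ℂ, f z = sinh (2 * I * z.1 + g z.2) / (2 * I)) (z : ℂ × ℂ) :
    deriv (fun t => f (t, z.2)) z.1 ^ 2 + (f (z + (c₁, 0)) - f z) ^ 2 = 1 := by
  have h2I : (2 * I : ℂ) ≠ 0 := mul_ne_zero two_ne_zero I_ne_zero
  have hderiv : deriv (fun t => f (t, z.2)) z.1 = cosh (2 * I * z.1 + g z.2) := by
    simp only [hf]
    exact (hasDerivAt_sinh_mul_add_div h2I _ _).deriv
  have hshift : f (z + (c₁, 0)) - f z = I * sinh (2 * I * z.1 + g z.2) := by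
    have hP : 2 * I * (z + (c₁, 0)).1 + g (z + (c₁, 0)).2
        = 2 * I * z.1 + g z.2 + 2 * I * c₁ := by
      simp only [Prod.fst_add, Prod.snd_add, add_zero]
      ring
    rw [hf, hf, hP, sinh_add_of_exp_eq_neg_one_s19 hc₁]
    field_simp
    rw [I_sq]
    ring
  rw [hderiv, hshift, mul_pow, I_sq, neg_one_mul, ← sub_eq_add_neg, cosh_sq_sub_sinh_sq]

/-- Example 6, instantiating Theorem 3(i) with k = 1. -/
theorem stmt_19 (c₁ : ℂ) (hc₁ : Complex.exp (2 * I * c₁) = -1)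
    (c : ℂ × ℂ) (hc : c = (c₁, 0))
    (P f₁ f₂ : ℂ × ℂ → ℂ)
    (hP : ∀ z : ℂ × ℂ, P z = 2 * I * z.1 - z.2 - z.2 ^ 10)
    (hf₁ : ∀ z : ℂ × ℂ, f₁ z = (Complex.exp (P z) - Complex.exp (-P z)) / (4 * I))
    (hf₂ : ∀ z : ℂ × ℂ, f₂ z = (Complex.exp (P z) - Complex.exp (-P z)) / (4 * I)) :
    ∀ z : ℂ × ℂ,
      (deriv (fun t => f₁ (t, z.2)) z.1) ^ 2 + (f₂ (z + c) - f₂ z) ^ 2 = 1 ∧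
      (deriv (fun t => f₂ (t, z.2)) z.1) ^ 2 + (f₁ (z + c) - f₁ z) ^ 2 = 1 := by
  have hf : ∀ z : ℂ × ℂ, f₁ z = sinh (2 * I * z.1 + (fun w => -w - w ^ 10) z.2) / (2 * I) := by
    intro z
    rw [hf₁, hP, sinh, div_div]
    ring_nf
  obtain rfl : f₂ = f₁ := funext fun z => (hf₂ z).trans (hf₁ z).symm
  subst hc
  intro z
  have key := deriv_sq_add_sub_sq_of_eq_sinh_div (fun w => -w - w ^ 10) hc₁ f₂ hf z
  exact ⟨key, key⟩
end
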